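/- arXiv:math/0103218 — 7 statements merged into one kernel-verified Lean document; each statement's English description precedes it below -/
import Mathlib

section
/- Let (b_m)_{m≥1} be a real sequence with β := ∑_{m=1}^∞ m|b_m| < ∞, and let λ ≥ 0. Define the operator g ↦ g̃ on bounded real sequences by g̃_0 = g_0 and g̃_n = g̃_{n−1} − λ[∑_{m=2}^n g_m b_m (g_{n−1} − g_{n−m}) + g_{n−1} ∑_{j=n+1}^∞ g_j b_j]. If ‖g‖_Δ := ∑_{n=0}^∞ |(Δg)_n| < ∞, then ∑_{n=0}^∞ |(Δg̃)_n| ≤ |g_0| + 2λβ‖g‖_Δ². In particular ‖g̃‖_Δ < ∞. -/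
/-!
Bound `|g_n| ≤ ‖g‖_Δ` and `|g_{n-1} - g_{n-m}| ≤ ∑_{n-m < j ≤ n-1} |(Δg)_j|`. Then
`|(Δg̃)_n| ≤ λ ‖g‖_Δ (∑_{m ≤ n} |b_m| ∑_{n-m < j ≤ n-1} |(Δg)_j| + ‖g‖_Δ ∑_{j > n} |b_j|)`.
Summed over `n`, each `|(Δg)_j|` occurs in at most `m` of the windows attached to `b_m`, and each
`|b_j|` in at most `j` of the tails, so both parts contribute at most `β ‖g‖_Δ`.
-/

open Finset

/-- The difference operator: `(Δg)_0 = g_0`, `(Δg)_n = g_n - g_{n-1}` for `n ≥ 1`. -/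
def deltaOp (g : ℕ → ℝ) : ℕ → ℝ
  | 0 => g 0
  | n + 1 => g (n + 1) - g n

noncomputable def deltaNorm (g : ℕ → ℝ) : ℝ := ∑' n, |deltaOp g n|

lemma deltaNorm_nonneg (g : ℕ → ℝ) : 0 ≤ deltaNorm g :=
  tsum_nonneg fun _ => abs_nonneg _

lemma sum_range_deltaOp (g : ℕ → ℝ) (n : ℕ) : ∑ k ∈ range (n + 1), deltaOp g k = g n := by
  induction n with
  | zero => simp [deltaOp]
  | succ n ih => rw [sum_range_succ, ih]; simp [deltaOp]

section DeltaNorm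

variable {g : ℕ → ℝ}

lemma sum_Ioc_deltaOp {c a : ℕ} (h : c ≤ a) : ∑ k ∈ Ioc c a, deltaOp g k = g a - g c := by
  induction a, h using Nat.le_induction with
  | base => simp
  | succ a hca ih => rw [sum_Ioc_succ_top hca, ih]; simp [deltaOp]

lemma abs_sub_le_sum_Ioc_abs_deltaOp {c a : ℕ} (h : c ≤ a) :
    |g a - g c| ≤ ∑ k ∈ Ioc c a, |deltaOp g k| :=
  sum_Ioc_deltaOp h ▸ abs_sum_le_sum_abs _ _

lemma abs_le_deltaNorm (hg : Summable fun n => |deltaOp g n|) (n : ℕ) : |g n| ≤ deltaNorm g :=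
  calc |g n| ≤ ∑ k ∈ range (n + 1), |deltaOp g k| :=
        sum_range_deltaOp g n ▸ abs_sum_le_sum_abs _ _
    _ ≤ deltaNorm g := hg.sum_le_tsum _ fun _ _ => abs_nonneg _

end DeltaNorm

/-- Each `j` lies in at most `m` of the windows `(k + 1 - m, k]`. -/
lemma sum_range_sum_Ioc_le {D : ℕ → ℝ} (hD : ∀ j, 0 ≤ D j) (hs : Summable D) (m M : ℕ) :
    ∑ k ∈ range M, ∑ j ∈ Ioc (k + 1 - m) k, D j ≤ m * ∑' j, D j := by
  have hcard : ∀ j, #((range M).filter fun k => j ∈ Ioc (k + 1 - m) k) ≤ m := fun j =>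
    calc _ ≤ #(Ico j (j + m)) := card_le_card fun k hk => by
            simp only [mem_filter, mem_range, mem_Ioc, mem_Ico] at hk ⊢; omega
      _ = m := by simp
  calc ∑ k ∈ range M, ∑ j ∈ Ioc (k + 1 - m) k, D j
      = ∑ j ∈ range M, ∑ _k ∈ (range M).filter fun k => j ∈ Ioc (k + 1 - m) k, D j :=
        sum_comm' fun k j => by simp only [mem_filter, mem_range, mem_Ioc]; omega
    _ ≤ ∑ j ∈ range M, m * D j := by
        gcongr with j
        rw [sum_const, nsmul_eq_mul]
        exact mul_le_mul_of_nonneg_right (by exact_mod_cast hcard j) (hD j)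
    _ ≤ m * ∑' j, D j := by
        rw [← mul_sum]
        exact mul_le_mul_of_nonneg_left (hs.sum_le_tsum _ fun j _ => hD j) m.cast_nonneg

section Tails

variable {b : ℕ → ℝ}

noncomputable def tailBound (b : ℕ → ℝ) (n : ℕ) : ℝ := ∑' j, if n < j then |b j| else 0

lemma tailBound_nonneg (b : ℕ → ℝ) (n : ℕ) : 0 ≤ tailBound b n :=
  tsum_nonneg fun j => by split_ifs <;> positivity

lemma ite_lt_le_natCast_mul (b : ℕ → ℝ) (n j : ℕ) :
    (if n < j then |b j| else 0) ≤ j * |b j| := by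
  split_ifs with h
  · exact le_mul_of_one_le_left (abs_nonneg _) (by exact_mod_cast Nat.one_le_of_lt h)
  · positivity

lemma summable_ite_lt (hb : Summable fun m : ℕ => (m : ℝ) * |b m|) (n : ℕ) :
    Summable fun j => if n < j then |b j| else 0 :=
  hb.of_nonneg_of_le (fun j => by split_ifs <;> positivity) (ite_lt_le_natCast_mul b n)

/-- `∑ₙ ∑_{j > n} |b j| = ∑ⱼ j |b j|`, here only its partial-sum inequality. -/
lemma sum_range_tailBound_le (hb : Summable fun m : ℕ => (m : ℝ) * |b m|) (M : ℕ) :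
    ∑ n ∈ range M, tailBound b n ≤ ∑' m : ℕ, (m : ℝ) * |b m| := by
  simp only [tailBound]
  rw [← Summable.tsum_finsetSum fun n _ => summable_ite_lt hb n]
  refine (summable_sum fun n _ => summable_ite_lt hb n).tsum_le_tsum (fun j => ?_) hb
  rw [← sum_filter, sum_const, nsmul_eq_mul]
  have hcard : #((range M).filter (· < j)) ≤ j :=
    (card_le_card fun n hn => by simp only [mem_filter, mem_range] at hn ⊢; omega).trans
      (card_range j).le
  exact mul_le_mul_of_nonneg_right (by exact_mod_cast hcard) (abs_nonneg _)

end Tails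

section Transform

variable {b g gt : ℕ → ℝ} {lam : ℝ}

noncomputable def tildeIncrement (b g : ℕ → ℝ) (n : ℕ) : ℝ :=
  (∑ m ∈ Icc 2 n, g m * b m * (g (n - 1) - g (n - m)))
    + g (n - 1) * ∑' j : ℕ, (if n + 1 ≤ j then g j * b j else 0)

/-- At `n = k + 1`, the first part of `tildeIncrement b g n` is at most `‖g‖_Δ` times this. -/
def memoryBound (b g : ℕ → ℝ) (k : ℕ) : ℝ :=
  ∑ m ∈ Icc 2 (k + 1), |b m| * ∑ j ∈ Ioc (k + 1 - m) k, |deltaOp g j|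

lemma abs_sum_memory_le (hg : Summable fun n => |deltaOp g n|) (k : ℕ) :
    |∑ m ∈ Icc 2 (k + 1), g m * b m * (g k - g (k + 1 - m))| ≤ deltaNorm g * memoryBound b g k := by
  refine (abs_sum_le_sum_abs _ _).trans ?_
  rw [memoryBound, mul_sum]
  refine sum_le_sum fun m hm => ?_
  have hm : k + 1 - m ≤ k := by simp only [mem_Icc] at hm; omega
  rw [abs_mul, abs_mul, ← mul_assoc]
  exact mul_le_mul (mul_le_mul_of_nonneg_right (abs_le_deltaNorm hg m) (abs_nonneg _))
    (abs_sub_le_sum_Ioc_abs_deltaOp hm) (abs_nonneg _)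
    (mul_nonneg (deltaNorm_nonneg g) (abs_nonneg _))

lemma abs_mul_tsum_tail_le (hb : Summable fun m : ℕ => (m : ℝ) * |b m|)
    (hg : Summable fun n => |deltaOp g n|) (i n : ℕ) :
    |g i * ∑' j, (if n + 1 ≤ j then g j * b j else 0)| ≤ deltaNorm g ^ 2 * tailBound b n := by
  have htail : ‖∑' j, (if n + 1 ≤ j then g j * b j else 0)‖ ≤ deltaNorm g * tailBound b n :=
    tsum_of_norm_bounded ((summable_ite_lt hb n).hasSum.mul_left (deltaNorm g)) fun j => by
      by_cases h : n < j
      · simp only [if_pos h, if_pos (show n + 1 ≤ j from h), Real.norm_eq_abs, abs_mul]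
        exact mul_le_mul_of_nonneg_right (abs_le_deltaNorm hg j) (abs_nonneg _)
      · simp only [if_neg h, if_neg (show ¬n + 1 ≤ j from h), norm_zero, mul_zero, le_refl]
  rw [abs_mul, sq, mul_assoc, ← Real.norm_eq_abs (∑' j, _)]
  exact mul_le_mul (abs_le_deltaNorm hg _) htail (abs_nonneg _) (deltaNorm_nonneg g)

lemma abs_tildeIncrement_succ_le (hb : Summable fun m : ℕ => (m : ℝ) * |b m|)
    (hg : Summable fun n => |deltaOp g n|) (k : ℕ) :
    |tildeIncrement b g (k + 1)| ≤
      deltaNorm g * memoryBound b g k + deltaNorm g ^ 2 * tailBound b (k + 1) := by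
  rw [tildeIncrement, Nat.add_sub_cancel]
  exact (abs_add_le _ _).trans
    (add_le_add (abs_sum_memory_le hg k) (abs_mul_tsum_tail_le hb hg k (k + 1)))

lemma abs_deltaOp_succ_le (hb : Summable fun m : ℕ => (m : ℝ) * |b m|) (hlam : 0 ≤ lam)
    (hg : Summable fun n => |deltaOp g n|)
    (hrec : ∀ n, 1 ≤ n → gt n = gt (n - 1) - lam * tildeIncrement b g n) (k : ℕ) :
    |deltaOp gt (k + 1)| ≤
      lam * (deltaNorm g * memoryBound b g k + deltaNorm g ^ 2 * tailBound b (k + 1)) := by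
  have hdelta : deltaOp gt (k + 1) = -(lam * tildeIncrement b g (k + 1)) := by
    rw [deltaOp, hrec (k + 1) (Nat.le_add_left 1 k), Nat.add_sub_cancel]; ring
  rw [hdelta, abs_neg, abs_mul, abs_of_nonneg hlam]
  exact mul_le_mul_of_nonneg_left (abs_tildeIncrement_succ_le hb hg k) hlam

lemma sum_range_memoryBound_le (hb : Summable fun m : ℕ => (m : ℝ) * |b m|)
    (hg : Summable fun n => |deltaOp g n|) (M : ℕ) :
    ∑ k ∈ range M, memoryBound b g k ≤ (∑' m : ℕ, (m : ℝ) * |b m|) * deltaNorm g := by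
  calc ∑ k ∈ range M, memoryBound b g k
      ≤ ∑ k ∈ range M, ∑ m ∈ range (M + 1), |b m| * ∑ j ∈ Ioc (k + 1 - m) k, |deltaOp g j| := by
        gcongr with k hk
        refine sum_le_sum_of_subset_of_nonneg (fun m hm => ?_) fun _ _ _ => by positivity
        simp only [mem_Icc, mem_range] at hk hm ⊢; omega
    _ = ∑ m ∈ range (M + 1), |b m| * ∑ k ∈ range M, ∑ j ∈ Ioc (k + 1 - m) k, |deltaOp g j| := by
        rw [sum_comm]; simp only [mul_sum]
    _ ≤ ∑ m ∈ range (M + 1), |b m| * (m * deltaNorm g) := by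
        gcongr with m
        exact sum_range_sum_Ioc_le (fun _ => abs_nonneg _) hg m M
    _ = (∑ m ∈ range (M + 1), (m : ℝ) * |b m|) * deltaNorm g := by
        rw [sum_mul]; exact sum_congr rfl fun _ _ => by ring
    _ ≤ (∑' m : ℕ, (m : ℝ) * |b m|) * deltaNorm g :=
        mul_le_mul_of_nonneg_right (hb.sum_le_tsum _ fun _ _ => by positivity)
          (deltaNorm_nonneg g)

lemma sum_range_abs_deltaOp_le (hb : Summable fun m : ℕ => (m : ℝ) * |b m|) (hlam : 0 ≤ lam)
    (hg : Summable fun n => |deltaOp g n|) (h0 : gt 0 = g 0)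
    (hrec : ∀ n, 1 ≤ n → gt n = gt (n - 1) - lam * tildeIncrement b g n) (N : ℕ) :
    ∑ n ∈ range N, |deltaOp gt n| ≤
      |g 0| + 2 * lam * (∑' m : ℕ, (m : ℝ) * |b m|) * deltaNorm g ^ 2 := by
  set β := ∑' m : ℕ, (m : ℝ) * |b m|
  set S := deltaNorm g
  have hS : 0 ≤ S := deltaNorm_nonneg g
  have hβ : 0 ≤ β := tsum_nonneg fun _ => by positivity
  cases N with
  | zero => simp only [range_zero, sum_empty]; positivity
  | succ M =>
    have hmemory := sum_range_memoryBound_le hb hg M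
    have htail : ∑ k ∈ range M, tailBound b (k + 1) ≤ β := by
      have := sum_range_tailBound_le hb (M + 1)
      rw [sum_range_succ'] at this
      linarith [tailBound_nonneg b 0]
    rw [sum_range_succ', show deltaOp gt 0 = g 0 from h0]
    calc ∑ k ∈ range M, |deltaOp gt (k + 1)| + |g 0|
        ≤ ∑ k ∈ range M, lam * (S * memoryBound b g k + S ^ 2 * tailBound b (k + 1)) + |g 0| := by
          gcongr with k
          exact abs_deltaOp_succ_le hb hlam hg hrec k
      _ = lam * (S * ∑ k ∈ range M, memoryBound b g k
            + S ^ 2 * ∑ k ∈ range M, tailBound b (k + 1)) + |g 0| := by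
          rw [← mul_sum, sum_add_distrib, ← mul_sum, ← mul_sum]
      _ ≤ lam * (S * (β * S) + S ^ 2 * β) + |g 0| := by gcongr
      _ = |g 0| + 2 * lam * β * S ^ 2 := by ring

end Transform

/-- If `‖g‖_Δ < ∞`, then the transformed sequence `g̃` (defined by `g̃_0 = g_0` and
`g̃_n = g̃_{n-1} - λ[∑_{m=2}^n g_m b_m (g_{n-1} - g_{n-m}) + g_{n-1} ∑_{j=n+1}^∞ g_j b_j]`)
satisfies `‖g̃‖_Δ ≤ |g_0| + 2λβ‖g‖_Δ² < ∞`, where `β = ∑_{m≥1} m |b_m|`. -/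
theorem deltaNorm_tilde_le (b : ℕ → ℝ) (hb : Summable fun m : ℕ => (m : ℝ) * |b m|)
    (lam : ℝ) (hlam : 0 ≤ lam) (g gt : ℕ → ℝ)
    (hg : Summable fun n => |deltaOp g n|)
    (h0 : gt 0 = g 0)
    (hrec : ∀ n, 1 ≤ n → gt n = gt (n - 1) -
      lam * ((∑ m ∈ Finset.Icc 2 n, g m * b m * (g (n - 1) - g (n - m)))
        + g (n - 1) * ∑' j : ℕ, (if n + 1 ≤ j then g j * b j else 0))) :
    Summable (fun n => |deltaOp gt n|) ∧
      (∑' n, |deltaOp gt n|) ≤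
        |g 0| + 2 * lam * (∑' m : ℕ, (m : ℝ) * |b m|) * (∑' n, |deltaOp g n|) ^ 2 := by
  have hpartial := sum_range_abs_deltaOp_le hb hlam hg h0 hrec
  exact ⟨summable_of_sum_range_le (fun _ => abs_nonneg _) hpartial,
    Real.tsum_le_of_sum_range_le (fun _ => abs_nonneg _) hpartial⟩
end

section
/- Let (a_n)_{n≥0} be a bounded real sequence with a_0 = 1, 1/2 ≤ a_n ≤ 3/2 for all n, ∑_{n=1}^∞ |a_n − a_{n−1}| ≤ 1/2, and satisfying a_n = (1 − λ∑_{m=1}^∞ a_m b_m) a_{n−1} + λ∑_{m=2}^n a_m b_m a_{n−m} for all n ≥ 1, where ∑_{m=1}^∞ m|b_m| < ∞. Then the limit α = lim_{n→∞} a_n exists and satisfies α⁻¹ = 1 + λ∑_{m=2}^∞ (m−1) a_m b_m. -/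
/-!
Summing the recurrence telescopes, with `Q N = a 0 + ⋯ + a (N - 1)` and `S = ∑_{m ≥ 1} a m b m`, to
`a N - 1 = λ (∑_{m=2}^N a m b m Q (N - m + 1) - S Q N)`. Splitting `S` at `N` rewrites this as
`λ a 1 b 1 Q N = -λ ∑_{m=2}^N a m b m (Q N - Q (N - m + 1)) - λ (∑_{m > N} a m b m) Q N
  - (a N - 1)`.
The increments of `a` are summable, so `a n → α` and `Q N - Q (N - m + 1) → (m - 1) α`; since
`∑ m |b m| < ∞`, dominated convergence sends the first term to
`-λ α ∑_{m ≥ 2} (m - 1) a m b m`, and the tail term tends to `0` because `Q N = O(N)` while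
`N ∑_{m > N} |b m| ≤ ∑_{m > N} m |b m| → 0`. Hence the left side converges although
`Q N ≥ N / 2 → ∞`, which forces `λ a 1 b 1 = 0`, and in the limit
`0 = 1 - α (1 + λ ∑_{m ≥ 2} (m - 1) a m b m)`.
-/

open Filter Finset Topology

theorem sum_range_sub_sum_range_eq {M : Type*} [AddCommGroup M] (a : ℕ → M) {m N : ℕ}
    (hm : 1 ≤ m) (hmN : m ≤ N) :
    ∑ k ∈ range N, a k - ∑ k ∈ range (N - m + 1), a k = ∑ j ∈ range (m - 1), a (N - m + 1 + j) := by
  have h := sum_range_add a (N - m + 1) (m - 1)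
  rw [show N - m + 1 + (m - 1) = N by omega] at h
  rw [h, add_sub_cancel_left]

theorem tendsto_sum_range_sub_sum_range {a : ℕ → ℝ} {α : ℝ} (ha : Tendsto a atTop (𝓝 α))
    {m : ℕ} (hm : 1 ≤ m) :
    Tendsto (fun N => ∑ k ∈ range N, a k - ∑ k ∈ range (N - m + 1), a k) atTop
      (𝓝 (((m : ℝ) - 1) * α)) := by
  have hshift : ∀ j, Tendsto (fun N => N - m + 1 + j) atTop atTop := fun j =>
    tendsto_atTop_atTop.mpr fun B => ⟨B + m, fun N hN => by omega⟩
  have hlim := tendsto_finsetSum (range (m - 1)) fun j _ => ha.comp (hshift j)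
  rw [sum_const, card_range, nsmul_eq_mul, Nat.cast_sub hm, Nat.cast_one] at hlim
  refine hlim.congr' ?_
  filter_upwards [eventually_ge_atTop m] with N hN
  exact (sum_range_sub_sum_range_eq a hm hN).symm

theorem abs_sum_range_sub_sum_range_le {a : ℕ → ℝ} {C : ℝ} (hC : ∀ n, |a n| ≤ C)
    {m N : ℕ} (hm : 1 ≤ m) (hmN : m ≤ N) :
    |∑ k ∈ range N, a k - ∑ k ∈ range (N - m + 1), a k| ≤ ((m : ℝ) - 1) * C := by
  rw [sum_range_sub_sum_range_eq a hm hmN]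
  calc |∑ j ∈ range (m - 1), a (N - m + 1 + j)|
      ≤ ∑ j ∈ range (m - 1), |a (N - m + 1 + j)| := abs_sum_le_sum_abs _ _
    _ ≤ ∑ _j ∈ range (m - 1), C := sum_le_sum fun j _ => hC _
    _ = ((m : ℝ) - 1) * C := by
      rw [sum_const, card_range, nsmul_eq_mul, Nat.cast_sub hm, Nat.cast_one]

theorem abs_sum_range_le {a : ℕ → ℝ} {C : ℝ} (hC : ∀ n, |a n| ≤ C) (N : ℕ) :
    |∑ k ∈ range N, a k| ≤ N * C := by
  calc |∑ k ∈ range N, a k| ≤ ∑ k ∈ range N, |a k| := abs_sum_le_sum_abs _ _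
    _ ≤ ∑ _k ∈ range N, C := sum_le_sum fun k _ => hC k
    _ = N * C := by rw [sum_const, card_range, nsmul_eq_mul]

theorem tendsto_sum_range_atTop_of_le {a : ℕ → ℝ} {c : ℝ} (hc : 0 < c) (h : ∀ n, c ≤ a n) :
    Tendsto (fun N => ∑ k ∈ range N, a k) atTop atTop := by
  refine tendsto_atTop_mono (fun N => ?_)
    ((tendsto_natCast_atTop_atTop (R := ℝ)).atTop_mul_const hc)
  calc (N : ℝ) * c = ∑ _k ∈ range N, c := by rw [sum_const, card_range, nsmul_eq_mul]
    _ ≤ ∑ k ∈ range N, a k := sum_le_sum fun k _ => h k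

theorem tendsto_natCast_mul_tsum_nat_add {f : ℕ → ℝ} (hf : Summable fun m : ℕ => (m : ℝ) * |f m|) :
    Tendsto (fun N : ℕ => (N : ℝ) * ∑' i, f (i + N)) atTop (𝓝 0) := by
  refine squeeze_zero_norm (fun N => ?_) (tendsto_sum_nat_add fun m : ℕ => (m : ℝ) * |f m|)
  rw [← tsum_mul_left]
  refine tsum_of_norm_bounded ((summable_nat_add_iff N).mpr hf).hasSum fun i => ?_
  rw [norm_mul, Real.norm_natCast, Real.norm_eq_abs]
  gcongr
  exact_mod_cast Nat.le_add_left N i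

theorem summable_ite_one_le {w : ℕ → ℝ} (hw : Summable fun m : ℕ => (m : ℝ) * |w m|) :
    Summable fun m : ℕ => if 1 ≤ m then w m else 0 := by
  refine hw.of_norm_bounded fun m => ?_
  split_ifs with hm
  · rw [Real.norm_eq_abs]
    exact le_mul_of_one_le_left (abs_nonneg _) (by exact_mod_cast hm)
  · rw [norm_zero]; positivity

theorem tsum_ite_one_le_eq {w : ℕ → ℝ} (hw : Summable fun m : ℕ => (m : ℝ) * |w m|) {N : ℕ}
    (hN : 1 ≤ N) :
    ∑' m : ℕ, (if 1 ≤ m then w m else 0) = w 1 + ∑ m ∈ Icc 2 N, w m + ∑' i, w (i + (N + 1)) := by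
  rw [← (summable_ite_one_le hw).sum_add_tsum_nat_add (N + 1)]
  have hrange : range (N + 1) = insert 0 (insert 1 (Icc 2 N)) := by
    ext x; simp only [mem_range, mem_insert, mem_Icc]; omega
  rw [hrange, sum_insert (by simp), sum_insert (by simp)]
  simp only [zero_lt_one.not_ge, le_refl, if_false, if_true, zero_add]
  congr 2
  exact sum_congr rfl fun m hm => if_pos (by simp only [mem_Icc] at hm; omega)

theorem tendsto_tsum_nat_add_mul_sum_range {a w : ℕ → ℝ} {C : ℝ} (hC : ∀ n, |a n| ≤ C)
    (hw : Summable fun m : ℕ => (m : ℝ) * |w m|) :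
    Tendsto (fun N => (∑' i, w (i + (N + 1))) * ∑ k ∈ range N, a k) atTop (𝓝 0) := by
  have htail := (tendsto_natCast_mul_tsum_nat_add hw).comp (tendsto_add_atTop_nat 1)
  refine (Asymptotics.IsBigO.of_bound C (Eventually.of_forall fun N => ?_)).trans_tendsto htail
  have hC0 : 0 ≤ C := (abs_nonneg _).trans (hC 0)
  have hQ := abs_sum_range_le hC N
  simp only [Function.comp, Real.norm_eq_abs, abs_mul, Nat.cast_add, Nat.cast_one]
  rw [abs_of_nonneg (by positivity : (0 : ℝ) ≤ N + 1)]
  nlinarith [abs_nonneg (∑' i, w (i + (N + 1)))]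

theorem tendsto_sum_Icc_mul_sum_range_sub {a w : ℕ → ℝ} {α C : ℝ} (ha : Tendsto a atTop (𝓝 α))
    (hC : ∀ n, |a n| ≤ C) (hw : Summable fun m : ℕ => (m : ℝ) * |w m|) :
    Tendsto (fun N => ∑ m ∈ Icc 2 N, w m * (∑ k ∈ range N, a k - ∑ k ∈ range (N - m + 1), a k))
      atTop (𝓝 (α * ∑' m : ℕ, if 2 ≤ m then ((m : ℝ) - 1) * w m else 0)) := by
  set f : ℕ → ℕ → ℝ := fun N m => if 2 ≤ m ∧ m ≤ N then
    w m * (∑ k ∈ range N, a k - ∑ k ∈ range (N - m + 1), a k) else 0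
  have hsum : ∀ N, ∑ m ∈ Icc 2 N, w m * (∑ k ∈ range N, a k - ∑ k ∈ range (N - m + 1), a k) =
      ∑' m, f N m := fun N => by
    rw [tsum_eq_sum (s := Icc 2 N) fun m hm => if_neg (by simpa only [mem_Icc] using hm)]
    exact sum_congr rfl fun m hm => (if_pos (mem_Icc.mp hm)).symm
  have hpoint : ∀ m, Tendsto (fun N => f N m) atTop
      (𝓝 (α * if 2 ≤ m then ((m : ℝ) - 1) * w m else 0)) := fun m => by
    by_cases h2 : 2 ≤ m
    · rw [if_pos h2, show α * (((m : ℝ) - 1) * w m) = w m * (((m : ℝ) - 1) * α) by ring]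
      refine ((tendsto_sum_range_sub_sum_range ha (by omega)).const_mul (w m)).congr' ?_
      filter_upwards [eventually_ge_atTop m] with N hN
      exact (if_pos ⟨h2, hN⟩).symm
    · simp only [f, h2, false_and, if_false, mul_zero, tendsto_const_nhds]
  have hbound : ∀ N m, ‖f N m‖ ≤ C * ((m : ℝ) * |w m|) := fun N m => by
    have hC0 : 0 ≤ C := (abs_nonneg _).trans (hC 0)
    simp only [f]
    split_ifs with h
    · rw [Real.norm_eq_abs, abs_mul]
      have := abs_sum_range_sub_sum_range_le hC (m := m) (N := N) (by omega) h.2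
      nlinarith [abs_nonneg (w m)]
    · simp only [norm_zero]; positivity
  simp_rw [hsum, ← tsum_mul_left]
  exact tendsto_tsum_of_dominated_convergence (hw.mul_left C) hpoint (Eventually.of_forall hbound)

theorem eq_zero_of_tendsto_const_mul {ι : Type*} {l : Filter ι} [l.NeBot] {Q : ι → ℝ} {c L : ℝ}
    (hQ : Tendsto Q l atTop) (h : Tendsto (fun i => c * Q i) l (𝓝 L)) : c = 0 := by
  by_contra hc
  rcases lt_or_gt_of_ne hc with hneg | hpos
  · exact not_tendsto_nhds_of_tendsto_atBot (hQ.const_mul_atTop_of_neg hneg) L h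
  · exact not_tendsto_nhds_of_tendsto_atTop (hQ.const_mul_atTop hpos) L h

theorem sum_range_sum_Icc_mul_eq {R : Type*} [CommSemiring R] (w v : ℕ → R) (N : ℕ) :
    ∑ k ∈ range N, ∑ m ∈ Icc 2 (k + 1), w m * v (k + 1 - m) =
      ∑ m ∈ Icc 2 N, w m * ∑ j ∈ range (N - m + 1), v j := by
  rw [sum_comm' (t' := Icc 2 N) (s' := fun m => Ico (m - 1) N) fun k m => by
    simp only [mem_range, mem_Icc, mem_Ico]; omega]
  refine sum_congr rfl fun m hm => ?_
  rw [mem_Icc] at hm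
  rw [mul_sum, sum_Ico_eq_sum_range, show N - (m - 1) = N - m + 1 by omega]
  exact sum_congr rfl fun j _ => by rw [show m - 1 + j + 1 - m = j by omega]

theorem sub_one_eq_of_recurrence {R : Type*} [CommRing R] {a w : ℕ → R} {lam S : R} (ha0 : a 0 = 1)
    (hrec : ∀ n, 1 ≤ n →
      a n = (1 - lam * S) * a (n - 1) + lam * ∑ m ∈ Icc 2 n, w m * a (n - m)) (N : ℕ) :
    a N - 1 =
      lam * (∑ m ∈ Icc 2 N, w m * ∑ j ∈ range (N - m + 1), a j - S * ∑ k ∈ range N, a k) := by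
  have hstep : ∀ k, a (k + 1) - a k =
      lam * (∑ m ∈ Icc 2 (k + 1), w m * a (k + 1 - m) - S * a k) := fun k => by
    rw [hrec (k + 1) (by omega), Nat.add_sub_cancel]; ring
  rw [← ha0, ← sum_range_sub, sum_congr rfl fun k _ => hstep k, ← mul_sum, sum_sub_distrib,
    ← mul_sum, sum_range_sum_Icc_mul_eq]

section Recurrence

variable {a w : ℕ → ℝ} {lam : ℝ}

theorem mul_sum_range_eq_of_recurrence (hw : Summable fun m : ℕ => (m : ℝ) * |w m|) (ha0 : a 0 = 1)
    (hrec : ∀ n, 1 ≤ n →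
      a n = (1 - lam * ∑' m : ℕ, (if 1 ≤ m then w m else 0)) * a (n - 1)
        + lam * ∑ m ∈ Icc 2 n, w m * a (n - m))
    {N : ℕ} (hN : 1 ≤ N) :
    lam * w 1 * ∑ k ∈ range N, a k =
      -(lam * ∑ m ∈ Icc 2 N, w m * (∑ k ∈ range N, a k - ∑ k ∈ range (N - m + 1), a k))
        - lam * ((∑' i, w (i + (N + 1))) * ∑ k ∈ range N, a k) - (a N - 1) := by
  rw [sub_one_eq_of_recurrence ha0 hrec N, tsum_ite_one_le_eq hw hN]
  simp only [mul_sub, sum_sub_distrib, ← sum_mul]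
  ring

theorem tendsto_mul_sum_range_of_recurrence {α C : ℝ} (ha : Tendsto a atTop (𝓝 α))
    (hC : ∀ n, |a n| ≤ C) (hw : Summable fun m : ℕ => (m : ℝ) * |w m|) (ha0 : a 0 = 1)
    (hrec : ∀ n, 1 ≤ n →
      a n = (1 - lam * ∑' m : ℕ, (if 1 ≤ m then w m else 0)) * a (n - 1)
        + lam * ∑ m ∈ Icc 2 n, w m * a (n - m)) :
    Tendsto (fun N => lam * w 1 * ∑ k ∈ range N, a k) atTop
      (𝓝 (1 - α * (1 + lam * ∑' m : ℕ, if 2 ≤ m then ((m : ℝ) - 1) * w m else 0))) := by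
  have hlim := (((tendsto_sum_Icc_mul_sum_range_sub ha hC hw).const_mul lam).neg.sub
    ((tendsto_tsum_nat_add_mul_sum_range hC hw).const_mul lam)).sub (ha.sub_const 1)
  refine Tendsto.congr' ?_ (by convert hlim using 2; ring)
  filter_upwards [eventually_ge_atTop 1] with N hN
  exact (mul_sum_range_eq_of_recurrence hw ha0 hrec hN).symm

end Recurrence

theorem limit_identity_general (b : ℕ → ℝ) (hb : Summable fun m : ℕ => (m : ℝ) * |b m|)
    (lam : ℝ) (a : ℕ → ℝ) (ha0 : a 0 = 1)
    (hbd : ∀ n, 1 / 2 ≤ a n ∧ a n ≤ 3 / 2)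
    (hS : Summable fun n : ℕ => |a (n + 1) - a n|)
    (hrec : ∀ n, 1 ≤ n →
      a n = (1 - lam * ∑' m : ℕ, (if 1 ≤ m then a m * b m else 0)) * a (n - 1)
        + lam * ∑ m ∈ Finset.Icc 2 n, a m * b m * a (n - m)) :
    ∃ α : ℝ, Filter.Tendsto a Filter.atTop (nhds α) ∧
      α⁻¹ = 1 + lam * ∑' m : ℕ, (if 2 ≤ m then ((m : ℝ) - 1) * a m * b m else 0) := by
  obtain ⟨α, ha⟩ : ∃ α, Tendsto a atTop (𝓝 α) := cauchySeq_tendsto_of_complete <|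
    cauchySeq_of_summable_dist <| by simpa only [Real.dist_eq, abs_sub_comm] using hS
  refine ⟨α, ha, ?_⟩
  have hC : ∀ n, |a n| ≤ 3 / 2 := fun n => abs_le.mpr ⟨by linarith [(hbd n).1], (hbd n).2⟩
  have hw : Summable fun m : ℕ => (m : ℝ) * |a m * b m| :=
    (hb.mul_left (3 / 2)).of_nonneg_of_le (fun m => by positivity) fun m =>
      calc (m : ℝ) * |a m * b m| = |a m| * (m * |b m|) := by rw [abs_mul]; ring
        _ ≤ 3 / 2 * (m * |b m|) := by gcongr; exact hC m
  have hlim := tendsto_mul_sum_range_of_recurrence (w := fun m => a m * b m) ha hC hw ha0 hrec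
  have hQ := tendsto_sum_range_atTop_of_le (by norm_num : (0 : ℝ) < 1 / 2) fun n => (hbd n).1
  rw [eq_zero_of_tendsto_const_mul hQ hlim] at hlim
  simp only [zero_mul] at hlim
  have hL := tendsto_nhds_unique tendsto_const_nhds hlim
  simp only [mul_assoc] at hL ⊢
  exact (eq_inv_of_mul_eq_one_left (by linear_combination hL)).symm

/-- For the fixed-point sequence `(a_n)` the limit `α = lim a_n` exists and satisfies
`α⁻¹ = 1 + λ ∑_{m=2}^∞ (m-1) a_m b_m`. -/
theorem limit_identity (b : ℕ → ℝ) (hb : Summable fun m : ℕ => (m : ℝ) * |b m|)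
    (lam : ℝ) (hlam : 0 ≤ lam) (a : ℕ → ℝ) (ha0 : a 0 = 1)
    (hbd : ∀ n, 1 / 2 ≤ a n ∧ a n ≤ 3 / 2)
    (hS : Summable fun n : ℕ => |a (n + 1) - a n|)
    (hS' : (∑' n : ℕ, |a (n + 1) - a n|) ≤ 1 / 2)
    (hrec : ∀ n, 1 ≤ n →
      a n = (1 - lam * ∑' m : ℕ, (if 1 ≤ m then a m * b m else 0)) * a (n - 1)
        + lam * ∑ m ∈ Finset.Icc 2 n, a m * b m * a (n - m)) :
    ∃ α : ℝ, Filter.Tendsto a Filter.atTop (nhds α) ∧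
      α⁻¹ = 1 + lam * ∑' m : ℕ, (if 2 ≤ m then ((m : ℝ) - 1) * a m * b m else 0) :=
  limit_identity_general b hb lam a ha0 hbd hS hrec
end

section
/- Let d ≥ 1 and η, θ ≥ 1/(2d). Then there is a constant K depending only on d such that for all x ∈ ℤ^d, ∑_{y∈ℤ^d} φ_η(y) φ_θ(x−y) ≤ K φ_{η+θ}(x), where φ_η(x) = (2πη)^{−d/2} exp(−|x|²/(2η)). -/
/-- The centered Gaussian density on `ℝ^d` with covariance `η·Id`, evaluated at lattice points. -/
noncomputable def gauss (d : ℕ) (η : ℝ) (x : Fin d → ℤ) : ℝ :=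
  (2 * Real.pi * η) ^ (-(d : ℝ) / 2) * Real.exp (-(∑ i, ((x i : ℝ)) ^ 2) / (2 * η))

/-!
Completing the square gives `φ_η(n) φ_θ(m - n) = φ_{η+θ}(m) (2πσ)^{-1/2} exp (-(n - c)² / (2σ))`
with `σ = ηθ/(η+θ)` and `c = ηm/(η+θ)`, and everything factorizes over the coordinates, so it
suffices to bound the one-dimensional theta sum `∑_{n ∈ ℤ} exp (-t (n - c)²)`. Splitting it at
`⌈c⌉` and using `t k² ≥ 2√t k - 1` compares it with two geometric series, which gives
`e (2 + t^{-1/2})`. Finally `σ ≥ 1/(4d)` when `η, θ ≥ 1/(2d)`, so each coordinate contributes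
at most the factor `e (1 + 2√d)`.
-/

open Real
open scoped ENNReal

theorem ENNReal.tsum_pi_prod_eq_prod_tsum {d : ℕ} {α : Fin d → Type*} (f : ∀ i, α i → ℝ≥0∞) :
    ∑' y : (∀ i, α i), ∏ i, f i (y i) = ∏ i, ∑' a, f i a := by
  induction d with
  | zero => simp
  | succ d ih =>
    rw [← (Fin.consEquiv α).tsum_eq, ENNReal.tsum_prod', Fin.prod_univ_succ]
    simp only [Fin.consEquiv_apply, Fin.prod_univ_succ, Fin.cons_zero, Fin.cons_succ,
      ENNReal.tsum_mul_left, ENNReal.tsum_mul_right, ih]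

theorem tsum_pi_prod_eq_prod_tsum {d : ℕ} {α : Fin d → Type*} {f : ∀ i, α i → ℝ}
    (hf : ∀ i a, 0 ≤ f i a) (hs : ∀ i, Summable (f i)) :
    ∑' y : (∀ i, α i), ∏ i, f i (y i) = ∏ i, ∑' a, f i a := by
  have hprod : ∀ y : (∀ i, α i), 0 ≤ ∏ i, f i (y i) := fun y ↦ Finset.prod_nonneg fun i _ ↦ hf i _
  have hE : ∑' y : (∀ i, α i), ENNReal.ofReal (∏ i, f i (y i)) =
      ENNReal.ofReal (∏ i, ∑' a, f i a) := by
    simp only [ENNReal.ofReal_prod_of_nonneg (fun i _ ↦ hf i _),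
      ENNReal.ofReal_prod_of_nonneg (fun i _ ↦ tsum_nonneg (hf i)),
      ENNReal.ofReal_tsum_of_nonneg (hf _) (hs _)]
    exact ENNReal.tsum_pi_prod_eq_prod_tsum fun i a ↦ ENNReal.ofReal (f i a)
  have hsum : Summable fun y : (∀ i, α i) ↦ ∏ i, f i (y i) := by
    refine (ENNReal.summable_toReal (hE ▸ ENNReal.ofReal_ne_top)).congr fun y ↦ ?_
    exact ENNReal.toReal_ofReal (hprod y)
  rw [← ENNReal.ofReal_eq_ofReal_iff (tsum_nonneg hprod)
    (Finset.prod_nonneg fun i _ ↦ tsum_nonneg (hf i)), ENNReal.ofReal_tsum_of_nonneg hprod hsum, hE]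

lemma inv_one_sub_exp_neg_le {v : ℝ} (hv : 0 < v) : (1 - exp (-v))⁻¹ ≤ 1 + v⁻¹ := by
  have h : exp (-v) ≤ (1 + v)⁻¹ := by
    rw [exp_neg]; exact inv_anti₀ (by positivity) (by linarith [add_one_le_exp v])
  calc (1 - exp (-v))⁻¹ ≤ (1 - (1 + v)⁻¹)⁻¹ := by
        gcongr
        · rw [sub_pos, inv_lt_one₀ (by positivity)]; linarith
    _ = 1 + v⁻¹ := by field_simp [hv.ne']; ring

lemma exp_neg_mul_natCast_sq_le {t : ℝ} (ht : 0 ≤ t) (k : ℕ) :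
    exp (-t * k ^ 2) ≤ exp 1 * exp (-(2 * √t)) ^ k := by
  rw [← exp_nat_mul, ← exp_add, exp_le_exp]
  nlinarith [sq_nonneg (√t * k - 1), sq_sqrt ht]

lemma summable_exp_neg_mul_natCast_sq {t : ℝ} (ht : 0 < t) :
    Summable fun k : ℕ ↦ exp (-t * k ^ 2) := by
  have hr : exp (-(2 * √t)) < 1 := by rw [exp_lt_one_iff, neg_lt_zero]; positivity
  exact .of_nonneg_of_le (fun _ ↦ (exp_pos _).le) (exp_neg_mul_natCast_sq_le ht.le)
    ((summable_geometric_of_lt_one (exp_pos _).le hr).mul_left _)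

lemma tsum_exp_neg_mul_natCast_sq_le {t : ℝ} (ht : 0 < t) :
    ∑' k : ℕ, exp (-t * k ^ 2) ≤ exp 1 * (1 + (2 * √t)⁻¹) := by
  have hr : exp (-(2 * √t)) < 1 := by rw [exp_lt_one_iff, neg_lt_zero]; positivity
  calc ∑' k : ℕ, exp (-t * k ^ 2) ≤ ∑' k : ℕ, exp 1 * exp (-(2 * √t)) ^ k :=
        (summable_exp_neg_mul_natCast_sq ht).tsum_le_tsum (exp_neg_mul_natCast_sq_le ht.le)
          ((summable_geometric_of_lt_one (exp_pos _).le hr).mul_left _)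
    _ = exp 1 * (1 - exp (-(2 * √t)))⁻¹ := by
        rw [tsum_mul_left, tsum_geometric_of_lt_one (exp_pos _).le hr]
    _ ≤ exp 1 * (1 + (2 * √t)⁻¹) := by gcongr; exact inv_one_sub_exp_neg_le (by positivity)

section TwoSided

variable {f : ℤ → ℝ} {g : ℕ → ℝ} {a : ℤ}

lemma summable_int_of_le_nat (hf : 0 ≤ f) (hg : Summable g)
    (hpos : ∀ k : ℕ, f (a + k) ≤ g k) (hneg : ∀ k : ℕ, f (a + -(k + 1)) ≤ g k) :
    Summable f := by
  rw [← (Equiv.addLeft a).summable_iff]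
  exact .of_nat_of_neg_add_one (hg.of_nonneg_of_le (fun _ ↦ hf _) hpos)
    (hg.of_nonneg_of_le (fun _ ↦ hf _) hneg)

lemma tsum_int_le_two_mul_tsum_nat (hf : 0 ≤ f) (hg : Summable g)
    (hpos : ∀ k : ℕ, f (a + k) ≤ g k) (hneg : ∀ k : ℕ, f (a + -(k + 1)) ≤ g k) :
    ∑' n, f n ≤ 2 * ∑' k, g k := by
  have hpos' := hg.of_nonneg_of_le (fun _ ↦ hf _) hpos
  have hneg' := hg.of_nonneg_of_le (fun _ ↦ hf _) hneg
  rw [← (Equiv.addLeft a).tsum_eq f]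
  simp only [Equiv.coe_addLeft]
  rw [tsum_of_nat_of_neg_add_one (f := fun n ↦ f (a + n)) hpos' hneg', two_mul]
  exact add_le_add (hpos'.tsum_le_tsum hpos hg) (hneg'.tsum_le_tsum hneg hg)

end TwoSided

lemma exp_neg_mul_sq_le_of_le_abs {t x y : ℝ} (ht : 0 ≤ t) (hx : 0 ≤ x) (hxy : x ≤ |y|) :
    exp (-t * y ^ 2) ≤ exp (-t * x ^ 2) := by
  rw [exp_le_exp, neg_mul, neg_mul, neg_le_neg_iff, ← sq_abs y]
  gcongr

lemma exp_neg_mul_sub_sq_ceil_le {t : ℝ} (ht : 0 ≤ t) (c : ℝ) (k : ℕ) :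
    exp (-t * (((⌈c⌉ + k : ℤ) : ℝ) - c) ^ 2) ≤ exp (-t * (k : ℝ) ^ 2) ∧
      exp (-t * (((⌈c⌉ + -(k + 1 : ℤ) : ℤ) : ℝ) - c) ^ 2) ≤ exp (-t * (k : ℝ) ^ 2) := by
  have h₁ := Int.le_ceil c
  have h₂ := Int.ceil_lt_add_one c
  push_cast
  constructor <;> refine exp_neg_mul_sq_le_of_le_abs ht k.cast_nonneg ?_
  · exact (by linarith : (k : ℝ) ≤ _).trans (le_abs_self _)
  · exact (by linarith : (k : ℝ) ≤ _).trans (neg_le_abs _)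

lemma summable_exp_neg_mul_sub_sq {t : ℝ} (ht : 0 < t) (c : ℝ) :
    Summable fun n : ℤ ↦ exp (-t * ((n : ℝ) - c) ^ 2) :=
  summable_int_of_le_nat (a := ⌈c⌉) (fun _ ↦ (exp_pos _).le) (summable_exp_neg_mul_natCast_sq ht)
    (fun k ↦ (exp_neg_mul_sub_sq_ceil_le ht.le c k).1)
    (fun k ↦ (exp_neg_mul_sub_sq_ceil_le ht.le c k).2)

lemma tsum_exp_neg_mul_sub_sq_le {t : ℝ} (ht : 0 < t) (c : ℝ) :
    ∑' n : ℤ, exp (-t * ((n : ℝ) - c) ^ 2) ≤ exp 1 * (2 + (√t)⁻¹) :=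
  calc ∑' n : ℤ, exp (-t * ((n : ℝ) - c) ^ 2) ≤ 2 * ∑' k : ℕ, exp (-t * (k : ℝ) ^ 2) :=
        tsum_int_le_two_mul_tsum_nat (a := ⌈c⌉) (fun _ ↦ (exp_pos _).le)
          (summable_exp_neg_mul_natCast_sq ht) (fun k ↦ (exp_neg_mul_sub_sq_ceil_le ht.le c k).1)
          (fun k ↦ (exp_neg_mul_sub_sq_ceil_le ht.le c k).2)
    _ ≤ 2 * (exp 1 * (1 + (2 * √t)⁻¹)) := by gcongr; exact tsum_exp_neg_mul_natCast_sq_le ht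
    _ = exp 1 * (2 + (√t)⁻¹) := by ring

noncomputable def gauss1 (η : ℝ) (n : ℤ) : ℝ := exp (-(n : ℝ) ^ 2 / (2 * η)) / √(2 * π * η)

lemma gauss_eq_prod_gauss1 (d : ℕ) {η : ℝ} (hη : 0 ≤ η) (x : Fin d → ℤ) :
    gauss d η x = ∏ i, gauss1 η (x i) := by
  have h : (2 * π * η) ^ (-(d : ℝ) / 2) = (√(2 * π * η) ^ d)⁻¹ := by
    rw [sqrt_eq_rpow, ← rpow_mul_natCast (by positivity), ← rpow_neg (by positivity)]
    ring_nf
  rw [gauss, h]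
  simp only [gauss1, Finset.prod_div_distrib, ← exp_sum, Finset.prod_const, Finset.card_univ,
    Fintype.card_fin, neg_div, Finset.sum_div, Finset.sum_neg_distrib]
  ring

lemma gauss1_mul_gauss1 {η θ : ℝ} (hη : 0 < η) (hθ : 0 < θ) (m n : ℤ) :
    gauss1 η n * gauss1 θ (m - n) = gauss1 (η + θ) m *
      (exp (-(2 * (η * θ / (η + θ)))⁻¹ * ((n : ℝ) - η * m / (η + θ)) ^ 2) /
        √(2 * π * (η * θ / (η + θ)))) := by
  have := pi_pos
  simp only [gauss1, div_mul_div_comm, ← exp_add, ← sqrt_mul (by positivity : (0 : ℝ) ≤ 2 * π * η),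
    ← sqrt_mul (by positivity : (0 : ℝ) ≤ 2 * π * (η + θ))]
  congr 2
  · field_simp
    push_cast
    ring
  · field_simp

lemma gauss1_nonneg (η : ℝ) (n : ℤ) : 0 ≤ gauss1 η n := by
  unfold gauss1; positivity

lemma summable_gauss1_mul_gauss1 {η θ : ℝ} (hη : 0 < η) (hθ : 0 < θ) (m : ℤ) :
    Summable fun n ↦ gauss1 η n * gauss1 θ (m - n) := by
  simp only [gauss1_mul_gauss1 hη hθ m]
  exact ((summable_exp_neg_mul_sub_sq (by positivity) _).div_const _).mul_left _

lemma tsum_gauss1_mul_gauss1_le {η θ : ℝ} (hη : 0 < η) (hθ : 0 < θ) (m : ℤ) :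
    ∑' n, gauss1 η n * gauss1 θ (m - n) ≤
      exp 1 * (1 + 2 / √(2 * π * (η * θ / (η + θ)))) * gauss1 (η + θ) m := by
  set σ := η * θ / (η + θ)
  have hσ : 0 < σ := by positivity
  have hπ : 1 ≤ π := by linarith [pi_gt_three]
  have hsqrt : √(2 * σ) ≤ √(2 * π * σ) := sqrt_le_sqrt (by nlinarith)
  have hpos : 0 < √(2 * π * σ) := sqrt_pos.2 (by positivity)
  simp only [gauss1_mul_gauss1 hη hθ m]
  rw [tsum_mul_left, tsum_div_const, mul_comm _ (gauss1 _ _)]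
  gcongr
  · exact gauss1_nonneg _ _
  calc (∑' n : ℤ, exp (-(2 * σ)⁻¹ * ((n : ℝ) - η * m / (η + θ)) ^ 2)) / √(2 * π * σ)
      ≤ exp 1 * (2 + (√(2 * σ)⁻¹)⁻¹) / √(2 * π * σ) := by
        gcongr; exact tsum_exp_neg_mul_sub_sq_le (by positivity) _
    _ = exp 1 * (2 / √(2 * π * σ) + √(2 * σ) / √(2 * π * σ)) := by
        rw [sqrt_inv, inv_inv]; ring
    _ ≤ exp 1 * (1 + 2 / √(2 * π * σ)) := by
        rw [add_comm 1]; gcongr; rwa [div_le_one hpos]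

lemma inv_sqrt_two_pi_mul_le_sqrt {D η θ : ℝ} (hD : 0 < D) (hη : 1 / (2 * D) ≤ η)
    (hθ : 1 / (2 * D) ≤ θ) : (√(2 * π * (η * θ / (η + θ))))⁻¹ ≤ √D := by
  have hη0 : 0 < η := lt_of_lt_of_le (by positivity) hη
  have hθ0 : 0 < θ := lt_of_lt_of_le (by positivity) hθ
  have hη' : 1 ≤ 2 * D * η := by rwa [div_le_iff₀ (by positivity), mul_comm] at hη
  have hθ' : 1 ≤ 2 * D * θ := by rwa [div_le_iff₀ (by positivity), mul_comm] at hθ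
  have key : 1 ≤ D * (2 * π * (η * θ / (η + θ))) := by
    rw [mul_div_assoc', mul_div_assoc', le_div_iff₀ (by positivity)]
    nlinarith [pi_gt_three, mul_pos (mul_pos hD hη0) hθ0, mul_le_mul_of_nonneg_right hη' hθ0.le,
      mul_le_mul_of_nonneg_right hθ' hη0.le]
  rw [inv_le_iff_one_le_mul₀ (sqrt_pos.2 (by positivity)), ← sqrt_mul hD.le]
  exact one_le_sqrt.2 key

lemma tsum_gauss1_mul_gauss1_le_of_le {D η θ : ℝ} (hD : 0 < D) (hη : 1 / (2 * D) ≤ η)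
    (hθ : 1 / (2 * D) ≤ θ) (m : ℤ) :
    ∑' n, gauss1 η n * gauss1 θ (m - n) ≤ exp 1 * (1 + 2 * √D) * gauss1 (η + θ) m := by
  refine (tsum_gauss1_mul_gauss1_le (lt_of_lt_of_le (by positivity) hη)
    (lt_of_lt_of_le (by positivity) hθ) m).trans ?_
  gcongr
  · exact gauss1_nonneg _ _
  rw [div_eq_mul_inv]
  gcongr
  exact inv_sqrt_two_pi_mul_le_sqrt hD hη hθ

/-- For `η, θ ≥ 1/(2d)`, the discrete convolution of two Gaussian densities is bounded by
a constant (depending only on `d`) times the Gaussian density with variance `η + θ`. -/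
theorem discrete_gaussian_convolution (d : ℕ) (hd : 1 ≤ d) :
    ∃ K : ℝ, 0 < K ∧ ∀ η θ : ℝ, 1 / (2 * d) ≤ η → 1 / (2 * d) ≤ θ →
      ∀ x : Fin d → ℤ,
        (∑' y : Fin d → ℤ, gauss d η y * gauss d θ (x - y)) ≤ K * gauss d (η + θ) x := by
  have hD : (0 : ℝ) < d := by exact_mod_cast hd
  refine ⟨(exp 1 * (1 + 2 * √d)) ^ d, by positivity, fun η θ hη hθ x ↦ ?_⟩
  have hη0 : 0 < η := lt_of_lt_of_le (by positivity) hη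
  have hθ0 : 0 < θ := lt_of_lt_of_le (by positivity) hθ
  have hsummand : ∀ (i : Fin d) (n : ℤ), 0 ≤ gauss1 η n * gauss1 θ (x i - n) :=
    fun _ _ ↦ mul_nonneg (gauss1_nonneg _ _) (gauss1_nonneg _ _)
  calc ∑' y : Fin d → ℤ, gauss d η y * gauss d θ (x - y)
      = ∑' y : Fin d → ℤ, ∏ i, gauss1 η (y i) * gauss1 θ (x i - y i) := by
        simp only [gauss_eq_prod_gauss1 d hη0.le, gauss_eq_prod_gauss1 d hθ0.le, Pi.sub_apply,
          Finset.prod_mul_distrib]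
    _ = ∏ i, ∑' n, gauss1 η n * gauss1 θ (x i - n) :=
        tsum_pi_prod_eq_prod_tsum hsummand fun i ↦ summable_gauss1_mul_gauss1 hη0 hθ0 (x i)
    _ ≤ ∏ i, exp 1 * (1 + 2 * √d) * gauss1 (η + θ) (x i) :=
        Finset.prod_le_prod (fun i _ ↦ tsum_nonneg (hsummand i))
          fun i _ ↦ tsum_gauss1_mul_gauss1_le_of_le hD hη hθ (x i)
    _ = (exp 1 * (1 + 2 * √d)) ^ d * gauss d (η + θ) x := by
        rw [Finset.prod_mul_distrib, Finset.prod_const, Finset.card_univ, Fintype.card_fin,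
          gauss_eq_prod_gauss1 d (by positivity)]
end

section
/- Let η > 0, n ∈ ℕ, and 0 < k < n. Then φ_{(n−k)η}(x) = φ_{nη}(x) − (k/(2n))·[x²/(nη) − d]·φ_{nη}(x) + S(x), where the remainder satisfies |S(x)| ≤ K(d,η)·(k/(n−k))²·(n/(n−k))^{d/2}·φ_{√2 nη}(x) for all x ∈ ℤ^d, with K(d,η) depending only on d and η. -/
/-!
At a fixed point `x`, `φ_{tη}(x)` is `(2πη)^(-d/2) g(t)` with `g(t) = t^(-p) exp(-B/t)`,
`p = d/2` and `B = x²/(2η)`, and the expansion is the first-order Taylor expansion of `g` at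
`t = n`, evaluated at `t = n - k`. Its remainder is at most `k² sup |g''|` over `[n - k, n]`,
where `g''(t) = g(t) q(B/t) / t²` for a quadratic `q`. A quarter of the factor `exp(-B/t)`
absorbs `q(B/t)`, and the remaining `exp(-3B/(4t))` is at most `exp(-B/(√2 n))` because
`1/√2 < 3/4`. The leftover power `(n - k)^(-p-2) k²` equals
`√2^p (k/(n-k))² (n/(n-k))^p (√2 n)^(-p)`, which produces `φ_{√2 nη}(x)`.
-/

open Real Set

lemma abs_sub_add_mul_deriv_le {f f' f'' : ℝ → ℝ} {a b M : ℝ} (hab : a ≤ b)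
    (hf : ∀ t ∈ Icc a b, HasDerivAt f (f' t) t) (hf' : ∀ t ∈ Icc a b, HasDerivAt f' (f'' t) t)
    (hM : ∀ t ∈ Icc a b, |f'' t| ≤ M) :
    |f a - f b + (b - a) * f' b| ≤ M * (b - a) ^ 2 := by
  have ha : a ∈ Icc a b := left_mem_Icc.2 hab
  have hb : b ∈ Icc a b := right_mem_Icc.2 hab
  have hM0 : 0 ≤ M := (abs_nonneg _).trans (hM a ha)
  have hdist : ∀ t ∈ Icc a b, ‖t - b‖ ≤ b - a := fun t ht => by
    rw [Real.norm_eq_abs, abs_sub_comm, abs_of_nonneg (by linarith [ht.2])]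
    linarith [ht.1]
  have hf'_sub : ∀ t ∈ Icc a b, ‖f' t - f' b‖ ≤ M * (b - a) := fun t ht =>
    ((convex_Icc a b).norm_image_sub_le_of_norm_hasDerivWithin_le
      (fun s hs => (hf' s hs).hasDerivWithinAt) hM hb ht).trans
      (mul_le_mul_of_nonneg_left (hdist t ht) hM0)
  have key := (convex_Icc a b).norm_image_sub_le_of_norm_hasDerivWithin_le
    (f := fun t => f t - t * f' b)
    (fun s hs => ((hf s hs).sub (hasDerivAt_mul_const (f' b))).hasDerivWithinAt) hf'_sub hb ha
  calc |f a - f b + (b - a) * f' b| = ‖(f a - a * f' b) - (f b - b * f' b)‖ := by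
        rw [Real.norm_eq_abs]; ring_nf
    _ ≤ M * (b - a) * ‖a - b‖ := key
    _ ≤ M * (b - a) * (b - a) := by gcongr; exact hdist a ha
    _ = M * (b - a) ^ 2 := by ring

lemma sq_add_le_mul_exp {u : ℝ} (hu : 0 ≤ u) (q : ℝ) :
    (u + q) ^ 2 ≤ (128 + 2 * q ^ 2) * exp (u / 4) := by
  have hlin : u / 8 + 1 ≤ exp (u / 8) := add_one_le_exp _
  have hsq : (u / 8 + 1) ^ 2 ≤ exp (u / 4) := by
    rw [show u / 4 = u / 8 + u / 8 by ring, exp_add, ← sq]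
    gcongr
  have hscaled : (128 + 2 * q ^ 2) * (u / 8 + 1) ^ 2 ≤ (128 + 2 * q ^ 2) * exp (u / 4) := by
    gcongr
  have hcross : 0 ≤ q ^ 2 * (u / 8 * (u / 8 + 2)) := by positivity
  nlinarith [sq_nonneg (u - q)]

noncomputable def gaussianProfile (p B t : ℝ) : ℝ := t ^ (-p) * exp (-B / t)

section gaussianProfile

variable {p B t : ℝ}

lemma gaussianProfile_pos (ht : 0 < t) : 0 < gaussianProfile p B t := by
  unfold gaussianProfile; positivity

lemma hasDerivAt_gaussianProfile (ht : 0 < t) :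
    HasDerivAt (gaussianProfile p B) (gaussianProfile p B t * (B / t - p) / t) t := by
  have hpow : HasDerivAt (fun s : ℝ => s ^ (-p)) (-p * t ^ (-p - 1)) t :=
    hasDerivAt_rpow_const (Or.inl ht.ne')
  have hexp : HasDerivAt (fun s : ℝ => exp (-B / s)) (exp (-B / t) * (B / t ^ 2)) t := by
    simpa [div_eq_mul_inv] using ((hasDerivAt_inv ht.ne').const_mul (-B)).exp
  refine (hpow.mul hexp).congr_deriv ?_
  rw [rpow_sub ht, rpow_one]
  unfold gaussianProfile
  field_simp
  ring

lemma hasDerivAt_gaussianProfile_deriv (ht : 0 < t) :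
    HasDerivAt (fun s => gaussianProfile p B s * (B / s - p) / s)
      (gaussianProfile p B t * ((B / t) ^ 2 - 2 * (p + 1) * (B / t) + p * (p + 1)) / t ^ 2) t := by
  have hrat : HasDerivAt (fun s : ℝ => (B / s - p) / s) (-2 * B / t ^ 3 + p / t ^ 2) t := by
    have := (((hasDerivAt_inv ht.ne').const_mul B).sub_const p).mul (hasDerivAt_inv ht.ne')
    refine (this.congr_deriv ?_).congr_of_eventuallyEq ?_
    · field_simp; ring
    · filter_upwards with s; simp [div_eq_mul_inv]
  refine (((hasDerivAt_gaussianProfile (p := p) (B := B) ht).mul hrat).congr_of_eventuallyEq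
    ?_).congr_deriv ?_
  · filter_upwards with s; simp [mul_div_assoc]
  · field_simp; ring

lemma abs_gaussianProfile_deriv2_le (hp : 0 ≤ p) (hB : 0 ≤ B) {a b : ℝ} (ha : 0 < a)
    (ht : t ∈ Icc a b) :
    |gaussianProfile p B t * ((B / t) ^ 2 - 2 * (p + 1) * (B / t) + p * (p + 1)) / t ^ 2|
      ≤ (128 + 2 * (p + 1) ^ 2) * a ^ (-p) / a ^ 2 * exp (-B / (√2 * b)) := by
  have ht0 : 0 < t := ha.trans_le ht.1
  set u := B / t with hu_def
  have hu : 0 ≤ u := by positivity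
  -- the quadratic is dominated by `(u + p + 1)²` since `u, p ≥ 0`
  have hpoly : |u ^ 2 - 2 * (p + 1) * u + p * (p + 1)| ≤ (128 + 2 * (p + 1) ^ 2) * exp (u / 4) :=
    (abs_le.2 ⟨by nlinarith, by nlinarith⟩).trans (sq_add_le_mul_exp hu (p + 1))
  have hsqrt2 : 4 / 3 ≤ √2 := (le_sqrt (by norm_num) (by norm_num)).2 (by norm_num)
  have hexp : exp (u / 4) * exp (-u) ≤ exp (-B / (√2 * b)) := by
    have : B / (√2 * b) ≤ 3 / 4 * u :=
      calc B / (√2 * b) ≤ B / (4 / 3 * t) :=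
            div_le_div_of_nonneg_left hB (by positivity) (by nlinarith [ht.2])
        _ = 3 / 4 * u := by rw [hu_def]; field_simp
    rw [← exp_add, exp_le_exp, neg_div]
    linarith
  have hpow : t ^ (-p) / t ^ 2 ≤ a ^ (-p) / a ^ 2 := by
    gcongr ?_ / ?_
    · exact rpow_le_rpow_of_nonpos ha ht.1 (by linarith)
    · exact pow_le_pow_left₀ ha.le ht.1 2
  calc |gaussianProfile p B t * (u ^ 2 - 2 * (p + 1) * u + p * (p + 1)) / t ^ 2|
      = t ^ (-p) / t ^ 2 * (exp (-u) * |u ^ 2 - 2 * (p + 1) * u + p * (p + 1)|) := by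
        rw [abs_div, abs_mul, abs_of_pos (gaussianProfile_pos ht0), abs_of_pos (pow_pos ht0 2),
          gaussianProfile, neg_div, ← hu_def]
        ring
    _ ≤ a ^ (-p) / a ^ 2 * (exp (-u) * ((128 + 2 * (p + 1) ^ 2) * exp (u / 4))) := by
        gcongr
    _ = a ^ (-p) / a ^ 2 * ((128 + 2 * (p + 1) ^ 2) * (exp (u / 4) * exp (-u))) := by ring
    _ ≤ a ^ (-p) / a ^ 2 * ((128 + 2 * (p + 1) ^ 2) * exp (-B / (√2 * b))) := by gcongr
    _ = _ := by ring

theorem exists_abs_gaussianProfile_taylor_le (hp : 0 ≤ p) :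
    ∃ K, 0 < K ∧ ∀ B, 0 ≤ B → ∀ a b, 0 < a → a ≤ b →
      |gaussianProfile p B a - gaussianProfile p B b +
          (b - a) * (gaussianProfile p B b * (B / b - p) / b)|
        ≤ K * ((b - a) / a) ^ 2 * (b / a) ^ p * gaussianProfile p B (√2 * b) := by
  refine ⟨(128 + 2 * (p + 1) ^ 2) * √2 ^ p, by positivity, fun B hB a b ha hab => ?_⟩
  have hpos : ∀ t ∈ Icc a b, 0 < t := fun t ht => ha.trans_le ht.1
  have hb : 0 < b := ha.trans_le hab
  refine (abs_sub_add_mul_deriv_le hab (fun t ht => hasDerivAt_gaussianProfile (hpos t ht))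
    (fun t ht => hasDerivAt_gaussianProfile_deriv (hpos t ht))
    (fun t ht => abs_gaussianProfile_deriv2_le hp hB ha ht)).trans_eq ?_
  rw [gaussianProfile, rpow_neg ha.le, rpow_neg (by positivity), div_rpow hb.le ha.le,
    mul_rpow (by positivity) hb.le]
  field_simp

end gaussianProfile

lemma gauss_mul_eq (d : ℕ) {η t : ℝ} (hη : 0 < η) (ht : 0 ≤ t) (x : Fin d → ℤ) :
    gauss d (t * η) x = (2 * π * η) ^ (-(d : ℝ) / 2) *
      gaussianProfile (d / 2) ((∑ i, ((x i : ℝ)) ^ 2) / (2 * η)) t := by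
  rw [gauss, gaussianProfile, show 2 * π * (t * η) = 2 * π * η * t by ring,
    mul_rpow (by positivity) ht, neg_div (2 : ℝ) (d : ℝ), mul_assoc]
  congr 3
  ring

theorem gaussian_variance_taylor_general (d : ℕ) (η : ℝ) (hη : 0 < η) :
    ∃ K : ℝ, 0 < K ∧ ∀ n k : ℕ, 0 < k → k < n → ∀ x : Fin d → ℤ,
      |gauss d (((n : ℝ) - k) * η) x -
        (gauss d (n * η) x -
          ((k : ℝ) / (2 * n)) * ((∑ i, ((x i : ℝ)) ^ 2) / (n * η) - d) * gauss d (n * η) x)|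
        ≤ K * ((k : ℝ) / ((n : ℝ) - k)) ^ 2 * ((n : ℝ) / ((n : ℝ) - k)) ^ ((d : ℝ) / 2) *
            gauss d (Real.sqrt 2 * n * η) x := by
  obtain ⟨K, hK, hprofile⟩ :=
    exists_abs_gaussianProfile_taylor_le (p := (d : ℝ) / 2) (by positivity)
  refine ⟨K, hK, fun n k hk hkn x => ?_⟩
  have hk' : (0 : ℝ) < k := by exact_mod_cast hk
  have hkn' : (k : ℝ) < n := by exact_mod_cast hkn
  rw [gauss_mul_eq d hη (by linarith) x, gauss_mul_eq d hη (by linarith) x,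
    gauss_mul_eq d hη (by positivity) x]
  set X := ∑ i, ((x i : ℝ)) ^ 2
  set g := gaussianProfile ((d : ℝ) / 2) (X / (2 * η))
  set A := (2 * π * η) ^ (-(d : ℝ) / 2)
  have hA : 0 < A := by positivity
  have hbound := hprofile (X / (2 * η)) (by positivity) (n - k) n (by linarith) (by linarith)
  rw [sub_sub_cancel] at hbound
  calc _ = |A * (g (n - k) - g n + k * (g n * (X / (2 * η) / n - d / 2) / n))| := by
        congr 1; field_simp; ring
    _ = A * |g (n - k) - g n + k * (g n * (X / (2 * η) / n - d / 2) / n)| := by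
        rw [abs_mul, abs_of_pos hA]
    _ ≤ A * (K * (k / (n - k)) ^ 2 * (n / (n - k)) ^ ((d : ℝ) / 2) * g (√2 * n)) := by
        gcongr
    _ = _ := by ring

/-- Taylor expansion in the variance variable: for `0 < k < n`,
`φ_{(n-k)η}(x) = φ_{nη}(x) - (k/(2n))[x²/(nη) - d]φ_{nη}(x) + S(x)` with
`|S(x)| ≤ K(d,η) (k/(n-k))² (n/(n-k))^{d/2} φ_{√2 nη}(x)`. -/
theorem gaussian_variance_taylor (d : ℕ) (hd : 1 ≤ d) (η : ℝ) (hη : 0 < η) :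
    ∃ K : ℝ, 0 < K ∧ ∀ n k : ℕ, 0 < k → k < n → ∀ x : Fin d → ℤ,
      |gauss d (((n : ℝ) - k) * η) x -
        (gauss d (n * η) x -
          ((k : ℝ) / (2 * n)) * ((∑ i, ((x i : ℝ)) ^ 2) / (n * η) - d) * gauss d (n * η) x)|
        ≤ K * ((k : ℝ) / ((n : ℝ) - k)) ^ 2 * ((n : ℝ) / ((n : ℝ) - k)) ^ ((d : ℝ) / 2) *
            gauss d (Real.sqrt 2 * n * η) x :=
  gaussian_variance_taylor_general d η hη
end

section
/- For the weakly self-avoiding walk connectivities, the recursion (lace expansion) C_n(x) = ∑_{y:|y|=1} C_{n−1}(x−y) + ∑_{m=2}^n ∑_{z∈ℤ^d} Π_m(z) C_{n−m}(x−z) holds for all n ≥ 1 and x ∈ ℤ^d. -/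
/-
Expand `K[0,n] = ∏_{s<t} (1 - λ U_st)` as a sum over all graphs `Γ` on `[0,n]` of
`∏_{st ∈ Γ} (-λ U_st)`. Graphs without an edge at `0` sum to `K[1,n]`. A graph with an edge at
`0` is cut at its first cut point `m ≥ 1` (the first time no edge jumps over) into a connected
graph on `[0,m]` and an arbitrary graph on `[m,n]`, and this is a bijection, so these graphs
contribute `∑_{m=1}^n J[0,m] K[m,n]`. Summing over walks and splitting each walk at time `1`,
resp. `m`, gives the two sums of the recursion; the `m = 1` term vanishes because a walk never
stays put, so `U_01 = 0`.
-/

open scoped Classical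

/-- The unit step of the nearest-neighbour walk encoded by a coordinate and a sign. -/
def dirStep (d : ℕ) (p : Fin d × Bool) : Fin d → ℤ :=
  fun i => if i = p.1 then (if p.2 then 1 else -1) else 0

/-- Position after `k` steps of the path encoded by the step sequence `σ`. -/
def pathPos {d n : ℕ} (σ : Fin n → Fin d × Bool) (k : ℕ) : Fin d → ℤ :=
  ∑ j : Fin n, if (j : ℕ) < k then dirStep d (σ j) else 0

/-- Intersection indicator `U_{st}(ω)`. -/
noncomputable def Uind {d n : ℕ} (σ : Fin n → Fin d × Bool) (s t : ℕ) : ℝ :=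
  if pathPos σ s = pathPos σ t then 1 else 0

/-- The connectivity `C_n(x)` of the weakly self-avoiding walk with parameter `λ`. -/
noncomputable def Conn (d : ℕ) (lam : ℝ) (n : ℕ) (x : Fin d → ℤ) : ℝ :=
  ∑ σ : Fin n → Fin d × Bool,
    if pathPos σ n = x then
      ∏ s ∈ Finset.range (n + 1), ∏ t ∈ Finset.Ioc s n, (1 - lam * Uind σ s t)
    else 0

/-- A graph (set of edges `(s,t)`, `s < t`) on `[a,b]` is connected. -/
def IsConnGraph (a b : ℕ) (Γ : Finset (ℕ × ℕ)) : Prop :=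
  (∀ e ∈ Γ, a ≤ e.1 ∧ e.1 < e.2 ∧ e.2 ≤ b) ∧
  (∃ e ∈ Γ, e.1 = a) ∧ (∃ e ∈ Γ, e.2 = b) ∧
  ∀ c, a < c → c < b → ∃ e ∈ Γ, e.1 < c ∧ c < e.2

/-- `J[a,b](ω) = ∑_{Γ connected on [a,b]} ∏_{st∈Γ} (-λ U_{st}(ω))`. -/
noncomputable def Jlace (d : ℕ) (lam : ℝ) {n : ℕ} (σ : Fin n → Fin d × Bool)
    (a b : ℕ) : ℝ :=
  ∑ Γ ∈ (Finset.range (b + 1) ×ˢ Finset.range (b + 1)).powerset.filter (IsConnGraph a b),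
    ∏ e ∈ Γ, (-(lam * Uind σ e.1 e.2))

/-- The lace function `Π_m(x) = ∑_{ω : 0 → x, |ω| = m} J[0,m](ω)`. -/
noncomputable def Pifun (d : ℕ) (lam : ℝ) (m : ℕ) (x : Fin d → ℤ) : ℝ :=
  ∑ σ : Fin m → Fin d × Bool, if pathPos σ m = x then Jlace d lam σ 0 m else 0

namespace LaceExpansion

open Finset

def edges (a b : ℕ) : Finset (ℕ × ℕ) :=
  (range (b + 1) ×ˢ range (b + 1)).filter fun e => a ≤ e.1 ∧ e.1 < e.2 ∧ e.2 ≤ b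

lemma mem_edges {a b : ℕ} {e : ℕ × ℕ} : e ∈ edges a b ↔ a ≤ e.1 ∧ e.1 < e.2 ∧ e.2 ≤ b := by
  simp only [edges, mem_filter, mem_product, mem_range]
  omega

def IsCut (Γ : Finset (ℕ × ℕ)) (c : ℕ) : Prop :=
  ∀ e ∈ Γ, ¬(e.1 < c ∧ c < e.2)

/-- `0` when `Γ` has no positive cut; a graph inside `edges 0 n` always has the cut `n`. -/
noncomputable def firstCut (Γ : Finset (ℕ × ℕ)) : ℕ :=
  sInf {c | 1 ≤ c ∧ IsCut Γ c}

lemma isCut_of_subset_edges {Γ : Finset (ℕ × ℕ)} {n : ℕ} (hΓ : Γ ⊆ edges 0 n) : IsCut Γ n :=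
  fun e he => by have := mem_edges.1 (hΓ he); omega

lemma firstCut_mem_Icc {Γ : Finset (ℕ × ℕ)} {n : ℕ} (hΓ : Γ ⊆ edges 0 n) (hn : 1 ≤ n) :
    firstCut Γ ∈ Icc 1 n := by
  have hmem : n ∈ {c | 1 ≤ c ∧ IsCut Γ c} := ⟨hn, isCut_of_subset_edges hΓ⟩
  exact mem_Icc.2 ⟨(Nat.sInf_mem ⟨n, hmem⟩).1, Nat.sInf_le hmem⟩

lemma isCut_firstCut {Γ : Finset (ℕ × ℕ)} (h : 1 ≤ firstCut Γ) : IsCut Γ (firstCut Γ) :=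
  (Nat.sInf_mem (Nat.nonempty_of_pos_sInf h)).2

lemma exists_crossing_of_lt_firstCut {Γ : Finset (ℕ × ℕ)} {c : ℕ} (hc : 1 ≤ c)
    (hlt : c < firstCut Γ) : ∃ e ∈ Γ, e.1 < c ∧ c < e.2 := by
  by_contra! h
  exact Nat.notMem_of_lt_sInf hlt ⟨hc, fun e he he' => absurd he'.2 (not_lt.2 (h e he he'.1))⟩

lemma exists_fst_eq_zero_and_firstCut_eq_iff {Γ : Finset (ℕ × ℕ)} (hΓ : ∀ e ∈ Γ, e.1 < e.2)
    {m : ℕ} (hm : 1 ≤ m) :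
    ((∃ e ∈ Γ, e.1 = 0) ∧ firstCut Γ = m) ↔
      IsConnGraph 0 m (Γ.filter (·.2 ≤ m)) ∧ IsCut Γ m := by
  constructor
  · rintro ⟨⟨e₀, he₀, he₀0⟩, rfl⟩
    have hcut := isCut_firstCut hm
    have hcover : ∀ c, 0 < c → c < firstCut Γ → ∃ e ∈ Γ.filter (·.2 ≤ firstCut Γ),
        e.1 < c ∧ c < e.2 := by
      intro c hc hlt
      obtain ⟨e, he, hec⟩ := exists_crossing_of_lt_firstCut hc hlt
      exact ⟨e, mem_filter.2 ⟨he, by have := hcut e he; omega⟩, hec⟩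
    have he₀m : e₀.2 ≤ firstCut Γ := by have := hcut e₀ he₀; have := hΓ e₀ he₀; omega
    refine ⟨⟨fun e he => ?_, ⟨e₀, mem_filter.2 ⟨he₀, he₀m⟩, he₀0⟩, ?_, hcover⟩, hcut⟩
    · have := hΓ e (mem_filter.1 he).1
      exact ⟨Nat.zero_le _, this, (mem_filter.1 he).2⟩
    · rcases Nat.lt_or_ge 1 (firstCut Γ) with h1 | h1
      · obtain ⟨e, he, hec⟩ := hcover (firstCut Γ - 1) (by omega) (by omega)
        exact ⟨e, he, by have := (mem_filter.1 he).2; omega⟩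
      · exact ⟨e₀, mem_filter.2 ⟨he₀, he₀m⟩, by have := hΓ e₀ he₀; omega⟩
  · rintro ⟨⟨-, ⟨e₀, he₀, he₀0⟩, -, hcover⟩, hcut⟩
    refine ⟨⟨e₀, (mem_filter.1 he₀).1, he₀0⟩, le_antisymm (Nat.sInf_le ⟨hm, hcut⟩) ?_⟩
    refine le_csInf ⟨m, hm, hcut⟩ fun c ⟨hc, hccut⟩ => ?_
    by_contra! hlt
    obtain ⟨e, he, hec⟩ := hcover c (by omega) hlt
    exact hccut e (mem_filter.1 he).1 hec

lemma subset_edges_of_isConnGraph {a b : ℕ} {Γ : Finset (ℕ × ℕ)} (h : IsConnGraph a b Γ) :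
    Γ ⊆ edges a b :=
  fun e he => mem_edges.2 (h.1 e he)

lemma filter_le_fst_eq_filter_not {Γ : Finset (ℕ × ℕ)} (hΓ : ∀ e ∈ Γ, e.1 < e.2) {m : ℕ}
    (hcut : IsCut Γ m) : Γ.filter (m ≤ ·.1) = Γ.filter (fun e => ¬ e.2 ≤ m) :=
  filter_congr fun e he => by have := hcut e he; have := hΓ e he; omega

lemma filter_union_of_subset_edges {m n : ℕ} {A B : Finset (ℕ × ℕ)} (hA : A ⊆ edges 0 m)
    (hB : B ⊆ edges m n) :
    (A ∪ B).filter (·.2 ≤ m) = A ∧ (A ∪ B).filter (m ≤ ·.1) = B ∧ IsCut (A ∪ B) m := by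
  have hA' := fun e (he : e ∈ A) => mem_edges.1 (hA he)
  have hB' := fun e (he : e ∈ B) => mem_edges.1 (hB he)
  refine ⟨?_, ?_, fun e he => ?_⟩
  · rw [filter_union, filter_true_of_mem fun e he => (hA' e he).2.2,
      filter_false_of_mem fun e he => by have := hB' e he; omega, union_empty]
  · rw [filter_union, filter_false_of_mem fun e he => by have := hA' e he; omega,
      filter_true_of_mem fun e he => (hB' e he).1, empty_union]
  · rcases mem_union.1 he with h | h
    · have := hA' e h; omega
    · have := hB' e h; omega

section Weights

variable {R : Type*} [CommSemiring R]

/-- `J[a,b]` for arbitrary edge weights `w`. -/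
noncomputable def connSum (w : ℕ × ℕ → R) (a b : ℕ) : R :=
  ∑ Γ ∈ (range (b + 1) ×ˢ range (b + 1)).powerset.filter (IsConnGraph a b), ∏ e ∈ Γ, w e

lemma sum_filter_firstCut_eq (w : ℕ × ℕ → R) {m n : ℕ} (hm : 1 ≤ m) (hmn : m ≤ n) :
    ∑ Γ ∈ (edges 0 n).powerset with (∃ e ∈ Γ, e.1 = 0) ∧ firstCut Γ = m, ∏ e ∈ Γ, w e =
      connSum w 0 m * ∑ Γ ∈ (edges m n).powerset, ∏ e ∈ Γ, w e := by
  have hlt : ∀ Γ ∈ (edges 0 n).powerset, ∀ e ∈ Γ, e.1 < e.2 :=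
    fun Γ hΓ e he => (mem_edges.1 (mem_powerset.1 hΓ he)).2.1
  rw [filter_congr fun Γ hΓ => exists_fst_eq_zero_and_firstCut_eq_iff (hlt Γ hΓ) hm, connSum,
    sum_mul_sum, ← sum_product']
  refine sum_nbij' (fun Γ => (Γ.filter (·.2 ≤ m), Γ.filter (m ≤ ·.1))) (fun p => p.1 ∪ p.2)
    ?_ ?_ ?_ ?_ ?_
  · intro Γ hΓ
    simp only [mem_filter, mem_powerset] at hΓ
    obtain ⟨hΓn, hconn, -⟩ := hΓ
    simp only [mem_product, mem_filter, mem_powerset]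
    refine ⟨⟨(subset_edges_of_isConnGraph hconn).trans fun e he => ?_, hconn⟩, fun e he => ?_⟩
    · have := mem_edges.1 he
      simp only [mem_product, mem_range]
      omega
    · have := mem_edges.1 (hΓn (mem_filter.1 he).1)
      exact mem_edges.2 ⟨(mem_filter.1 he).2, this.2⟩
  · intro p hp
    simp only [mem_product, mem_filter, mem_powerset] at hp
    obtain ⟨⟨-, hconn⟩, hp₂⟩ := hp
    obtain ⟨hlow, -, hcut⟩ := filter_union_of_subset_edges (subset_edges_of_isConnGraph hconn) hp₂
    simp only [mem_filter, mem_powerset, hlow]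
    refine ⟨union_subset ((subset_edges_of_isConnGraph hconn).trans fun e he => ?_)
      (hp₂.trans fun e he => ?_), hconn, hcut⟩
    · exact mem_edges.2 (by have := mem_edges.1 he; omega)
    · exact mem_edges.2 (by have := mem_edges.1 he; omega)
  · intro Γ hΓ
    simp only [mem_filter] at hΓ
    rw [filter_le_fst_eq_filter_not (hlt Γ hΓ.1) hΓ.2.2, filter_union_filter_not_eq]
  · intro p hp
    simp only [mem_product, mem_filter, mem_powerset] at hp
    obtain ⟨hlow, hhigh, -⟩ :=
      filter_union_of_subset_edges (subset_edges_of_isConnGraph hp.1.2) hp.2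
    exact Prod.ext hlow hhigh
  · intro Γ hΓ
    simp only [mem_filter] at hΓ
    rw [filter_le_fst_eq_filter_not (hlt Γ hΓ.1) hΓ.2.2, prod_filter_mul_prod_filter_not]

lemma powerset_filter_not_exists_fst_eq_zero (n : ℕ) :
    (edges 0 n).powerset.filter (fun Γ => ¬ ∃ e ∈ Γ, e.1 = 0) = (edges 1 n).powerset := by
  ext Γ
  simp only [mem_filter, mem_powerset, subset_iff, mem_edges, not_exists, not_and]
  exact ⟨fun h e he => by have := h.1 he; have := h.2 e he; omega,
    fun h => ⟨fun e he => by have := h he; omega, fun e he => by have := h he; omega⟩⟩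

theorem prod_one_add_edges_zero (w : ℕ × ℕ → R) {n : ℕ} (hn : 1 ≤ n) :
    ∏ e ∈ edges 0 n, (1 + w e) =
      ∏ e ∈ edges 1 n, (1 + w e) + ∑ m ∈ Icc 1 n, connSum w 0 m * ∏ e ∈ edges m n, (1 + w e) := by
  simp_rw [prod_one_add]
  rw [← sum_filter_not_add_sum_filter _ (fun Γ => ∃ e ∈ Γ, e.1 = 0),
    powerset_filter_not_exists_fst_eq_zero,
    ← sum_fiberwise_of_maps_to (g := firstCut) (t := Icc 1 n)
      fun Γ hΓ => firstCut_mem_Icc (mem_powerset.1 (mem_filter.1 hΓ).1) hn]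
  congr 1
  refine sum_congr rfl fun m hm => ?_
  rw [filter_filter]
  exact sum_filter_firstCut_eq w (mem_Icc.1 hm).1 (mem_Icc.1 hm).2

end Weights

variable {d : ℕ}

lemma pathPos_zero {n : ℕ} (σ : Fin n → Fin d × Bool) : pathPos σ 0 = 0 := by
  simp [pathPos]

lemma pathPos_of_le {m : ℕ} (σ : Fin m → Fin d × Bool) {s : ℕ} (h : m ≤ s) :
    pathPos σ s = pathPos σ m :=
  sum_congr rfl fun j _ => by rw [if_pos (by omega), if_pos j.isLt]

lemma pathPos_one {k : ℕ} (σ : Fin (k + 1) → Fin d × Bool) : pathPos σ 1 = dirStep d (σ 0) := by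
  simp [pathPos]

lemma pathPos_append {m k : ℕ} (σ₁ : Fin m → Fin d × Bool) (σ₂ : Fin k → Fin d × Bool)
    (t : ℕ) : pathPos (Fin.append σ₁ σ₂) t = pathPos σ₁ t + pathPos σ₂ (t - m) := by
  simp only [pathPos, Fin.sum_univ_add, Fin.append_left, Fin.append_right, Fin.val_castAdd,
    Fin.val_natAdd]
  congr 1
  exact sum_congr rfl fun j _ => if_congr (by omega) rfl rfl

lemma dirStep_ne_zero (p : Fin d × Bool) : dirStep d p ≠ 0 := fun h => by
  obtain ⟨i, b⟩ := p
  have := congrFun h i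
  cases b <;> simp [dirStep] at this

lemma Uind_append_of_le {m k : ℕ} (σ₁ : Fin m → Fin d × Bool) (σ₂ : Fin k → Fin d × Bool)
    {s t : ℕ} (hs : s ≤ m) (ht : t ≤ m) : Uind (Fin.append σ₁ σ₂) s t = Uind σ₁ s t := by
  simp only [Uind, pathPos_append, Nat.sub_eq_zero_of_le hs, Nat.sub_eq_zero_of_le ht,
    pathPos_zero, add_zero]

lemma Uind_append_of_ge {m k : ℕ} (σ₁ : Fin m → Fin d × Bool) (σ₂ : Fin k → Fin d × Bool)
    {s t : ℕ} (hs : m ≤ s) (ht : m ≤ t) :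
    Uind (Fin.append σ₁ σ₂) s t = Uind σ₂ (s - m) (t - m) := by
  simp only [Uind, pathPos_append, pathPos_of_le σ₁ hs, pathPos_of_le σ₁ ht, add_right_inj]

/-- The paper's `K[a,b](ω)`. -/
noncomputable def K (lam : ℝ) {n : ℕ} (σ : Fin n → Fin d × Bool) (a b : ℕ) : ℝ :=
  ∏ e ∈ edges a b, (1 - lam * Uind σ e.1 e.2)

lemma conn_eq_sum_K (lam : ℝ) (n : ℕ) (x : Fin d → ℤ) :
    Conn d lam n x = ∑ σ : Fin n → Fin d × Bool with pathPos σ n = x, K lam σ 0 n := by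
  rw [Conn, sum_filter]
  refine sum_congr rfl fun σ _ => congrArg (ite _ · 0) ?_
  refine (prod_finset_product' _ _ _ fun e => ?_).symm
  simp only [mem_edges, mem_range, mem_Ioc]
  omega

lemma Jlace_eq_connSum (lam : ℝ) {n : ℕ} (σ : Fin n → Fin d × Bool) (a b : ℕ) :
    Jlace d lam σ a b = connSum (fun e => -(lam * Uind σ e.1 e.2)) a b :=
  rfl

lemma K_eq_K_add_sum_Jlace_mul_K (lam : ℝ) {n : ℕ} (σ : Fin n → Fin d × Bool) (hn : 1 ≤ n) :
    K lam σ 0 n = K lam σ 1 n + ∑ m ∈ Icc 1 n, Jlace d lam σ 0 m * K lam σ m n := by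
  simp only [K, sub_eq_add_neg, Jlace_eq_connSum]
  exact prod_one_add_edges_zero _ hn

lemma Jlace_zero_one (lam : ℝ) {k : ℕ} (σ : Fin (k + 1) → Fin d × Bool) :
    Jlace d lam σ 0 1 = 0 := by
  refine sum_eq_zero fun Γ hΓ => ?_
  obtain ⟨hbound, ⟨e, he, he₀⟩, -⟩ := (mem_filter.1 hΓ).2
  have : e = (0, 1) := by have := hbound e he; ext <;> omega
  subst this
  refine prod_eq_zero he ?_
  simp [Uind, pathPos_zero, pathPos_one, (dirStep_ne_zero _).symm]

lemma Jlace_append (lam : ℝ) {m k : ℕ} (σ₁ : Fin m → Fin d × Bool)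
    (σ₂ : Fin k → Fin d × Bool) : Jlace d lam (Fin.append σ₁ σ₂) 0 m = Jlace d lam σ₁ 0 m :=
  sum_congr rfl fun Γ hΓ => prod_congr rfl fun e he => by
    have := (mem_filter.1 hΓ).2.1 e he
    rw [Uind_append_of_le σ₁ σ₂ (by omega) this.2.2]

lemma K_append (lam : ℝ) {m k : ℕ} (σ₁ : Fin m → Fin d × Bool) (σ₂ : Fin k → Fin d × Bool) :
    K lam (Fin.append σ₁ σ₂) m (m + k) = K lam σ₂ 0 k := by
  refine prod_nbij' (fun e => (e.1 - m, e.2 - m)) (fun e => (e.1 + m, e.2 + m)) ?_ ?_ ?_ ?_ ?_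
  · intro e he
    simp only [mem_edges] at he ⊢
    omega
  · intro e he
    simp only [mem_edges] at he ⊢
    omega
  · intro e he
    have := mem_edges.1 he
    ext <;> dsimp only <;> omega
  · intro e _
    simp
  · intro e he
    rw [Uind_append_of_ge σ₁ σ₂ (mem_edges.1 he).1 (by have := mem_edges.1 he; omega)]

lemma sum_fin_append {α M : Type*} [Fintype α] [AddCommMonoid M] {m k : ℕ}
    (F : (Fin (m + k) → α) → M) :
    ∑ σ, F σ = ∑ σ₁ : Fin m → α, ∑ σ₂ : Fin k → α, F (Fin.append σ₁ σ₂) := by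
  rw [← Fintype.sum_prod_type']
  exact (Fintype.sum_equiv (Fin.appendEquiv m k) _ _ fun _ => rfl).symm

lemma sum_mul_K_eq_sum_mul_conn (lam : ℝ) {m k : ℕ} (x : Fin d → ℤ)
    {F : (Fin (m + k) → Fin d × Bool) → ℝ} {G : (Fin m → Fin d × Bool) → ℝ}
    (hF : ∀ σ₁ σ₂, F (Fin.append σ₁ σ₂) = G σ₁) :
    ∑ σ : Fin (m + k) → Fin d × Bool with pathPos σ (m + k) = x, F σ * K lam σ m (m + k) =
      ∑ σ₁ : Fin m → Fin d × Bool, G σ₁ * Conn d lam k (x - pathPos σ₁ m) := by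
  rw [sum_filter, sum_fin_append]
  refine sum_congr rfl fun σ₁ _ => ?_
  rw [conn_eq_sum_K, mul_sum, sum_filter]
  refine sum_congr rfl fun σ₂ _ => ?_
  rw [hF, K_append, pathPos_append, pathPos_of_le σ₁ (by omega), Nat.add_sub_cancel_left]
  exact if_congr eq_sub_iff_add_eq'.symm rfl rfl

lemma sum_K_one_eq (lam : ℝ) {n : ℕ} (hn : 1 ≤ n) (x : Fin d → ℤ) :
    ∑ σ : Fin n → Fin d × Bool with pathPos σ n = x, K lam σ 1 n =
      ∑ p : Fin d × Bool, Conn d lam (n - 1) (x - dirStep d p) := by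
  obtain ⟨k, rfl⟩ : ∃ k, n = 1 + k := ⟨n - 1, by omega⟩
  have h := sum_mul_K_eq_sum_mul_conn lam x (m := 1) (k := k) (F := fun _ => 1)
    (G := fun _ => 1) fun _ _ => rfl
  simp only [one_mul] at h
  rw [h, Nat.add_sub_cancel_left]
  exact Fintype.sum_equiv (Equiv.funUnique (Fin 1) _) _ _ fun σ₁ => by rw [pathPos_one]; rfl

lemma sum_Jlace_mul_K_eq (lam : ℝ) {m n : ℕ} (hmn : m ≤ n) (x : Fin d → ℤ) :
    ∑ σ : Fin n → Fin d × Bool with pathPos σ n = x, Jlace d lam σ 0 m * K lam σ m n =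
      ∑' z : Fin d → ℤ, Pifun d lam m z * Conn d lam (n - m) (x - z) := by
  obtain ⟨k, rfl⟩ : ∃ k, n = m + k := ⟨n - m, by omega⟩
  rw [sum_mul_K_eq_sum_mul_conn lam x (Jlace_append lam), Nat.add_sub_cancel_left]
  simp_rw [Pifun, sum_mul, ite_mul, zero_mul]
  rw [Summable.tsum_finsetSum fun σ₁ _ => summable_of_ne_finset_zero (s := {pathPos σ₁ m})
    fun z hz => if_neg fun h => hz (mem_singleton.2 h.symm)]
  refine sum_congr rfl fun σ₁ _ => ?_
  rw [tsum_ite_eq']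

end LaceExpansion

open Finset LaceExpansion in
theorem lace_expansion_general (d : ℕ) (lam : ℝ) (n : ℕ) (hn : 1 ≤ n) (x : Fin d → ℤ) :
    Conn d lam n x =
      (∑ p : Fin d × Bool, Conn d lam (n - 1) (x - dirStep d p)) +
        ∑ m ∈ Finset.Icc 2 n,
          ∑' z : Fin d → ℤ, Pifun d lam m z * Conn d lam (n - m) (x - z) := by
  obtain ⟨k, rfl⟩ : ∃ k, n = k + 1 := ⟨n - 1, by omega⟩
  have hIcc : Icc 1 (k + 1) = insert 1 (Icc 2 (k + 1)) := by
    ext m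
    simp only [mem_Icc, mem_insert]
    omega
  rw [conn_eq_sum_K, sum_congr rfl fun σ _ => K_eq_K_add_sum_Jlace_mul_K lam σ hn,
    sum_add_distrib, sum_K_one_eq lam hn, sum_comm, hIcc, sum_insert (by simp)]
  simp only [Jlace_zero_one, zero_mul, sum_const_zero, zero_add]
  exact congrArg _ (sum_congr rfl fun m hm => sum_Jlace_mul_K_eq lam (mem_Icc.1 hm).2 x)

/-- The lace expansion recursion:
`C_n(x) = ∑_{|y|=1} C_{n-1}(x-y) + ∑_{m=2}^n ∑_z Π_m(z) C_{n-m}(x-z)` for `n ≥ 1`. -/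
theorem lace_expansion (d : ℕ) (hd : 1 ≤ d) (lam : ℝ) (h0 : 0 ≤ lam) (h1 : lam ≤ 1)
    (n : ℕ) (hn : 1 ≤ n) (x : Fin d → ℤ) :
    Conn d lam n x =
      (∑ p : Fin d × Bool, Conn d lam (n - 1) (x - dirStep d p)) +
        ∑ m ∈ Finset.Icc 2 n,
          ∑' z : Fin d → ℤ, Pifun d lam m z * Conn d lam (n - m) (x - z) :=
  lace_expansion_general d lam n hn x
end

section
/- For every nearest-neighbour path ω of length n ≥ 1 one has K[0,n](ω) = K[1,n](ω) + ∑_{m=2}^n J[0,m](ω)·K[m,n](ω), where K[a,b](ω) = ∏_{a≤s<t≤b}(1−λU_{st}(ω)) and J[a,b](ω) = ∑_{Γ∈𝒢[a,b]} ∏_{st∈Γ}(−λU_{st}(ω)) is the sum over connected graphs on [a,b]. -/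
open scoped Classical

/-- `K[a,b](ω) = ∏_{a ≤ s < t ≤ b} (1 - λ U_{st}(ω))`. -/
noncomputable def Kfun (lam : ℝ) {d n : ℕ} (σ : Fin n → Fin d × Bool) (a b : ℕ) : ℝ :=
  ∏ s ∈ Finset.Icc a b, ∏ t ∈ Finset.Ioc s b, (1 - lam * Uind σ s t)

/-!
Expanding `K[a,n] = ∏ (1 + w e)` over the edges `e` of `[a,n]` gives a sum over all graphs `Γ` on
`[a,n]`. Graphs in which no edge starts at `a` sum to `K[a+1,n]`. For the others, let `m` be the
largest `t` such that the edges of `Γ` inside `[a,t]` form a connected graph on `[a,t]`; then no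
edge of `Γ` crosses `m`, so `Γ` splits uniquely into a connected graph on `[a,m]` and an arbitrary
graph on `[m,n]`, and these sum to `J[a,m] K[m,n]`. Finally `J[0,1] = 0` because a walk always
leaves its starting point: `U_{01} = 0`.
-/

open Finset

def edgeSet (a b : ℕ) : Finset (ℕ × ℕ) :=
  (range (b + 1) ×ˢ range (b + 1)).filter fun e => a ≤ e.1 ∧ e.1 < e.2 ∧ e.2 ≤ b

@[simp]
lemma mem_edgeSet {a b : ℕ} {e : ℕ × ℕ} : e ∈ edgeSet a b ↔ a ≤ e.1 ∧ e.1 < e.2 ∧ e.2 ≤ b := by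
  simp only [edgeSet, mem_filter, mem_product, mem_range]
  omega

lemma IsConnGraph.subset_edgeSet {a b : ℕ} {Γ : Finset (ℕ × ℕ)} (h : IsConnGraph a b Γ) :
    Γ ⊆ edgeSet a b :=
  fun e he => mem_edgeSet.2 (h.1 e he)

lemma filter_powerset_edgeSet_not_exists_fst_eq (a n : ℕ) :
    (edgeSet a n).powerset.filter (fun Γ => ¬ ∃ e ∈ Γ, e.1 = a) = (edgeSet (a + 1) n).powerset := by
  ext Γ
  simp only [mem_filter, mem_powerset, subset_iff, mem_edgeSet, not_exists, not_and]
  constructor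
  · rintro ⟨hΓ, hΓa⟩ e he
    have := hΓ he
    have := hΓa e he
    omega
  · intro hΓ
    exact ⟨fun e he => by have := hΓ he; omega, fun e he => by have := hΓ he; omega⟩

section ConnPrefix

variable {a m n : ℕ} {Γ Γ₁ Γ₂ : Finset (ℕ × ℕ)} {e : ℕ × ℕ}

def IsConnPrefix (a : ℕ) (Γ : Finset (ℕ × ℕ)) (t : ℕ) : Prop :=
  IsConnGraph a t (Γ.filter fun e => e.2 ≤ t)

noncomputable def maxConnPrefix (a n : ℕ) (Γ : Finset (ℕ × ℕ)) : ℕ :=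
  Nat.findGreatest (IsConnPrefix a Γ) n

lemma isConnPrefix_snd (hΓ : Γ ⊆ edgeSet a n) (he : e ∈ Γ) (ha : e.1 = a) :
    IsConnPrefix a Γ e.2 := by
  have he' : e ∈ Γ.filter fun e' => e'.2 ≤ e.2 := mem_filter.2 ⟨he, le_rfl⟩
  refine ⟨fun x hx => ?_, ⟨e, he', ha⟩, ⟨e, he', rfl⟩, fun c hac hc => ⟨e, he', by omega, hc⟩⟩
  have := mem_edgeSet.1 (hΓ (mem_filter.1 hx).1)
  exact ⟨this.1, this.2.1, (mem_filter.1 hx).2⟩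

lemma IsConnPrefix.extend {t : ℕ} (h : IsConnPrefix a Γ t) (hΓ : Γ ⊆ edgeSet a n) (he : e ∈ Γ)
    (h₁ : e.1 < t) (h₂ : t < e.2) : IsConnPrefix a Γ e.2 := by
  obtain ⟨-, ⟨x, hx, hxa⟩, -, hcover⟩ := h
  have he' : e ∈ Γ.filter fun e' => e'.2 ≤ e.2 := mem_filter.2 ⟨he, le_rfl⟩
  have hx' := mem_filter.1 hx
  refine ⟨fun y hy => ?_, ⟨x, mem_filter.2 ⟨hx'.1, by omega⟩, hxa⟩, ⟨e, he', rfl⟩,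
    fun c hac hc => ?_⟩
  · have := mem_edgeSet.1 (hΓ (mem_filter.1 hy).1)
    exact ⟨this.1, this.2.1, (mem_filter.1 hy).2⟩
  · by_cases hct : c < t
    · obtain ⟨y, hy, hyc⟩ := hcover c hac hct
      exact ⟨y, mem_filter.2 ⟨(mem_filter.1 hy).1, by have := (mem_filter.1 hy).2; omega⟩, hyc⟩
    · exact ⟨e, he', by omega, hc⟩

lemma maxConnPrefix_spec (hΓ : Γ ⊆ edgeSet a n) (hΓa : ∃ e ∈ Γ, e.1 = a) :
    a < maxConnPrefix a n Γ ∧ maxConnPrefix a n Γ ≤ n ∧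
      IsConnPrefix a Γ (maxConnPrefix a n Γ) := by
  obtain ⟨e, he, ha⟩ := hΓa
  have hen := mem_edgeSet.1 (hΓ he)
  have hP := isConnPrefix_snd hΓ he ha
  have := Nat.le_findGreatest hen.2.2 hP
  exact ⟨by unfold maxConnPrefix; omega, Nat.findGreatest_le n, Nat.findGreatest_spec hen.2.2 hP⟩

lemma snd_le_or_le_fst_of_maxConnPrefix (hΓ : Γ ⊆ edgeSet a n) (hΓa : ∃ e ∈ Γ, e.1 = a)
    (he : e ∈ Γ) : e.2 ≤ maxConnPrefix a n Γ ∨ maxConnPrefix a n Γ ≤ e.1 := by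
  by_contra! hcross
  obtain ⟨-, -, hP⟩ := maxConnPrefix_spec hΓ hΓa
  have := Nat.le_findGreatest (mem_edgeSet.1 (hΓ he)).2.2
    (hP.extend hΓ he hcross.2 hcross.1)
  unfold maxConnPrefix at hcross
  omega

lemma filter_snd_le_union (hΓ₁ : Γ₁ ⊆ edgeSet a m) (hΓ₂ : Γ₂ ⊆ edgeSet m n) :
    (Γ₁ ∪ Γ₂).filter (fun e => e.2 ≤ m) = Γ₁ := by
  rw [filter_union, filter_true_of_mem fun e he => (mem_edgeSet.1 (hΓ₁ he)).2.2,
    filter_false_of_mem fun e he => by have := mem_edgeSet.1 (hΓ₂ he); omega, union_empty]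

lemma filter_not_snd_le_union (hΓ₁ : Γ₁ ⊆ edgeSet a m) (hΓ₂ : Γ₂ ⊆ edgeSet m n) :
    (Γ₁ ∪ Γ₂).filter (fun e => ¬ e.2 ≤ m) = Γ₂ := by
  rw [filter_union, filter_false_of_mem fun e he => not_not.2 (mem_edgeSet.1 (hΓ₁ he)).2.2,
    filter_true_of_mem fun e he => by have := mem_edgeSet.1 (hΓ₂ he); omega, empty_union]

lemma maxConnPrefix_union (ha : a < m) (hmn : m ≤ n) (hΓ₁ : IsConnGraph a m Γ₁)
    (hΓ₂ : Γ₂ ⊆ edgeSet m n) : maxConnPrefix a n (Γ₁ ∪ Γ₂) = m := by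
  have hsub₁ := hΓ₁.subset_edgeSet
  refine Nat.findGreatest_eq_iff.2 ⟨hmn, fun _ => ?_, fun t hmt _ hP => ?_⟩
  · rwa [IsConnPrefix, filter_snd_le_union hsub₁ hΓ₂]
  · obtain ⟨x, hx, hxm⟩ := hP.2.2.2 m ha hmt
    rcases mem_union.1 (mem_filter.1 hx).1 with h | h
    · have := mem_edgeSet.1 (hsub₁ h); omega
    · have := mem_edgeSet.1 (hΓ₂ h); omega

end ConnPrefix

section LaceExpansion

variable {R : Type*} [CommRing R] (w : ℕ × ℕ → R)

noncomputable def connSum (a b : ℕ) : R :=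
  ∑ Γ ∈ (edgeSet a b).powerset.filter (IsConnGraph a b), ∏ e ∈ Γ, w e

lemma sum_filter_maxConnPrefix_eq {a m n : ℕ} (ha : a < m) (hmn : m ≤ n) :
    ∑ Γ ∈ ((edgeSet a n).powerset.filter fun Γ => ∃ e ∈ Γ, e.1 = a).filter
        (fun Γ => maxConnPrefix a n Γ = m), ∏ e ∈ Γ, w e
      = connSum w a m * ∑ Γ ∈ (edgeSet m n).powerset, ∏ e ∈ Γ, w e := by
  rw [connSum, sum_mul_sum, ← sum_product']
  refine sum_nbij' (fun Γ => (Γ.filter fun e => e.2 ≤ m, Γ.filter fun e => ¬ e.2 ≤ m))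
    (fun p => p.1 ∪ p.2) ?_ ?_ (fun Γ _ => filter_union_filter_not_eq _ Γ) ?_ ?_
  · intro Γ hΓ
    simp only [mem_filter, mem_powerset] at hΓ
    obtain ⟨⟨hΓn, hΓa⟩, rfl⟩ := hΓ
    obtain ⟨-, -, hconn⟩ := maxConnPrefix_spec hΓn hΓa
    refine mem_product.2 ⟨mem_filter.2 ⟨mem_powerset.2 hconn.subset_edgeSet, hconn⟩,
      mem_powerset.2 fun e he => ?_⟩
    have he' := mem_filter.1 he
    have := mem_edgeSet.1 (hΓn he'.1)
    have := snd_le_or_le_fst_of_maxConnPrefix hΓn hΓa he'.1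
    exact mem_edgeSet.2 (by omega)
  · rintro ⟨Γ₁, Γ₂⟩ hp
    simp only [mem_product, mem_filter, mem_powerset] at hp
    obtain ⟨⟨-, hΓ₁⟩, hΓ₂⟩ := hp
    obtain ⟨e, he, hea⟩ := hΓ₁.2.1
    refine mem_filter.2 ⟨mem_filter.2 ⟨mem_powerset.2 fun x hx => ?_,
      ⟨e, mem_union_left _ he, hea⟩⟩, maxConnPrefix_union ha hmn hΓ₁ hΓ₂⟩
    rcases mem_union.1 hx with h | h
    · have := mem_edgeSet.1 (hΓ₁.subset_edgeSet h); exact mem_edgeSet.2 (by omega)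
    · have := mem_edgeSet.1 (hΓ₂ h); exact mem_edgeSet.2 (by omega)
  · rintro ⟨Γ₁, Γ₂⟩ hp
    simp only [mem_product, mem_filter, mem_powerset] at hp
    obtain ⟨⟨-, hΓ₁⟩, hΓ₂⟩ := hp
    exact Prod.ext (filter_snd_le_union hΓ₁.subset_edgeSet hΓ₂)
      (filter_not_snd_le_union hΓ₁.subset_edgeSet hΓ₂)
  · intro Γ _
    exact (prod_filter_mul_prod_filter_not Γ (fun e => e.2 ≤ m) w).symm

theorem prod_one_add_edgeSet (a n : ℕ) :
    ∏ e ∈ edgeSet a n, (1 + w e) =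
      ∏ e ∈ edgeSet (a + 1) n, (1 + w e) +
        ∑ m ∈ Ioc a n, connSum w a m * ∏ e ∈ edgeSet m n, (1 + w e) := by
  simp only [prod_one_add]
  rw [← sum_filter_not_add_sum_filter _ (fun Γ => ∃ e ∈ Γ, e.1 = a),
    filter_powerset_edgeSet_not_exists_fst_eq]
  congr 1
  have hmaps : ∀ Γ ∈ (edgeSet a n).powerset.filter (fun Γ => ∃ e ∈ Γ, e.1 = a),
      maxConnPrefix a n Γ ∈ Ioc a n := fun Γ hΓ => by
    obtain ⟨hΓn, hΓa⟩ := mem_filter.1 hΓ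
    obtain ⟨h₁, h₂, -⟩ := maxConnPrefix_spec (mem_powerset.1 hΓn) hΓa
    exact mem_Ioc.2 ⟨h₁, h₂⟩
  rw [← sum_fiberwise_of_maps_to hmaps]
  exact sum_congr rfl fun m hm =>
    sum_filter_maxConnPrefix_eq w (mem_Ioc.1 hm).1 (mem_Ioc.1 hm).2

end LaceExpansion

section Walk

variable {d n : ℕ} (lam : ℝ) (σ : Fin n → Fin d × Bool)

noncomputable def edgeWeight (e : ℕ × ℕ) : ℝ := -(lam * Uind σ e.1 e.2)

lemma Kfun_eq_prod_edgeSet (a b : ℕ) :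
    Kfun lam σ a b = ∏ e ∈ edgeSet a b, (1 + edgeWeight lam σ e) := by
  rw [Kfun, ← prod_finset_product' (edgeSet a b) (Icc a b) (fun s => Ioc s b)
    fun e => by simp only [mem_edgeSet, mem_Icc, mem_Ioc]; omega]
  simp only [edgeWeight, sub_eq_add_neg]

lemma Jlace_eq_connSum (a b : ℕ) : Jlace d lam σ a b = connSum (edgeWeight lam σ) a b := by
  refine sum_congr ?_ fun Γ _ => rfl
  ext Γ
  simp only [mem_filter, mem_powerset]
  refine and_congr_left fun hΓ => ⟨fun _ => hΓ.subset_edgeSet, fun h e he => ?_⟩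
  have := mem_edgeSet.1 (h he)
  simp only [mem_product, mem_range]
  omega

lemma pathPos_zero : pathPos σ 0 = 0 := by
  simp [pathPos]

lemma pathPos_one (hn : 1 ≤ n) : pathPos σ 1 = dirStep d (σ ⟨0, hn⟩) := by
  rw [pathPos, sum_eq_single ⟨0, hn⟩ (fun j _ hj => if_neg fun h => hj (Fin.ext (Nat.lt_one_iff.1 h)))
    (fun h => (h (mem_univ _)).elim)]
  simp

lemma dirStep_ne_zero (p : Fin d × Bool) : dirStep d p ≠ 0 := by
  intro h
  have := congrFun h p.1
  simp only [dirStep, Pi.zero_apply] at this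
  split_ifs at this <;> omega

lemma Uind_zero_one (hn : 1 ≤ n) : Uind σ 0 1 = 0 := by
  rw [Uind, pathPos_zero, pathPos_one σ hn, if_neg (dirStep_ne_zero _).symm]

lemma connSum_edgeWeight_zero_one (hn : 1 ≤ n) : connSum (edgeWeight lam σ) 0 1 = 0 := by
  refine sum_eq_zero fun Γ hΓ => ?_
  obtain ⟨e, he, he₀⟩ := (mem_filter.1 hΓ).2.2.1
  have he₁ := (mem_filter.1 hΓ).2.1 e he
  have : e = (0, 1) := Prod.ext he₀ (by omega)
  subst this
  exact prod_eq_zero he (by rw [edgeWeight, Uind_zero_one σ hn, mul_zero, neg_zero])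

end Walk

theorem K_decomposition_general (d : ℕ) (lam : ℝ)
    (n : ℕ) (hn : 1 ≤ n) (σ : Fin n → Fin d × Bool) :
    Kfun lam σ 0 n =
      Kfun lam σ 1 n + ∑ m ∈ Finset.Icc 2 n, Jlace d lam σ 0 m * Kfun lam σ m n := by
  have hIoc : Ioc 0 n = insert 1 (Icc 2 n) := by
    ext m
    simp only [mem_Ioc, mem_insert, mem_Icc]
    omega
  simp only [Kfun_eq_prod_edgeSet, Jlace_eq_connSum]
  rw [prod_one_add_edgeSet, hIoc, sum_insert (by simp), connSum_edgeWeight_zero_one lam σ hn]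
  simp only [zero_mul, zero_add]

/-- For every path `ω` of length `n ≥ 1`:
`K[0,n] = K[1,n] + ∑_{m=2}^n J[0,m] K[m,n]`. -/
theorem K_decomposition (d : ℕ) (hd : 1 ≤ d) (lam : ℝ) (h0 : 0 ≤ lam) (h1 : lam ≤ 1)
    (n : ℕ) (hn : 1 ≤ n) (σ : Fin n → Fin d × Bool) :
    Kfun lam σ 0 n =
      Kfun lam σ 1 n + ∑ m ∈ Finset.Icc 2 n, Jlace d lam σ 0 m * Kfun lam σ m n :=
  K_decomposition_general d lam n hn σ
end

section
/- For the one-edge lace contribution one has, for all m ≥ 2 and x ∈ ℤ^d, Π_m^{(1)}(x) ≤ δ_{0,x}·2d·(D*C_{m−1})(0), where D is the uniform nearest-neighbour step distribution and C_{m−1} the weakly self-avoiding walk connectivity. -/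
/-!
The indicator `U_{0m}` forces the walk to return to the origin, so `Π_m^{(1)}(x)` vanishes
for `x ≠ 0`. For `x = 0`, split the walk into its first step `e` and a walk of length
`m - 1` from `e` to `0`. Every factor `1 - λU_{st}` lies in `[0, 1]`, so dropping `U_{0m}` and
all factors with `s = 0` only increases the weight; what remains is the weakly self-avoiding
weight of the translated tail, a walk from `0` to `-e`. Summing over `e` gives
`∑_e C_{m-1}(-e) = 2d (D * C_{m-1})(0)`.
-/

open scoped Classical

/-- The one-edge lace contribution
`Π_m^{(1)}(x) = ∑_{ω:0→x,|ω|=m} U_{0m}(ω) ∏_{0≤s<t≤m, st≠0m} (1 - λU_{st}(ω))`. -/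
noncomputable def PiOne (d : ℕ) (lam : ℝ) (m : ℕ) (x : Fin d → ℤ) : ℝ :=
  ∑ σ : Fin m → Fin d × Bool,
    if pathPos σ m = x then
      Uind σ 0 m *
        ∏ s ∈ Finset.range (m + 1), ∏ t ∈ Finset.Ioc s m,
          (if (s, t) = (0, m) then 1 else 1 - lam * Uind σ s t)
    else 0

open Finset

lemma prod_range_prod_Ioc_succ {M : Type*} [CommMonoid M] (f : ℕ → ℕ → M) (n : ℕ) :
    ∏ s ∈ range (n + 2), ∏ t ∈ Ioc s (n + 1), f s t =
      (∏ s ∈ range (n + 1), ∏ t ∈ Ioc s n, f (s + 1) (t + 1)) *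
        ∏ t ∈ Ioc 0 (n + 1), f 0 t := by
  rw [prod_range_succ']
  congr 1
  refine prod_congr rfl fun s _ => ?_
  rw [← map_add_right_Ioc s n 1, prod_map]
  rfl

section Walks

variable {d n : ℕ}

lemma pathPos_zero_s15 (σ : Fin n → Fin d × Bool) : pathPos σ 0 = 0 := by
  simp [pathPos]

lemma pathPos_cons (p : Fin d × Bool) (σ : Fin n → Fin d × Bool) (s : ℕ) :
    pathPos (Fin.cons p σ : Fin (n + 1) → Fin d × Bool) (s + 1) = dirStep d p + pathPos σ s := by
  simp [pathPos, Fin.sum_univ_succ]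

lemma Uind_cons (p : Fin d × Bool) (σ : Fin n → Fin d × Bool) (s t : ℕ) :
    Uind (Fin.cons p σ : Fin (n + 1) → Fin d × Bool) (s + 1) (t + 1) = Uind σ s t := by
  simp [Uind, pathPos_cons]

lemma Uind_zero_left_of_ne {σ : Fin n → Fin d × Bool} {t : ℕ} (h : pathPos σ t ≠ 0) :
    Uind σ 0 t = 0 := by
  rw [Uind, pathPos_zero_s15, if_neg (Ne.symm h)]

lemma Uind_nonneg (σ : Fin n → Fin d × Bool) (s t : ℕ) : 0 ≤ Uind σ s t := by
  unfold Uind; split <;> norm_num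

lemma Uind_le_one (σ : Fin n → Fin d × Bool) (s t : ℕ) : Uind σ s t ≤ 1 := by
  unfold Uind; split <;> norm_num

variable {lam : ℝ}

lemma one_sub_mul_Uind_nonneg (h1 : lam ≤ 1) (σ : Fin n → Fin d × Bool) (s t : ℕ) :
    0 ≤ 1 - lam * Uind σ s t := by
  nlinarith [Uind_nonneg σ s t, Uind_le_one σ s t]

lemma one_sub_mul_Uind_le_one (h0 : 0 ≤ lam) (σ : Fin n → Fin d × Bool) (s t : ℕ) :
    1 - lam * Uind σ s t ≤ 1 := by
  nlinarith [Uind_nonneg σ s t]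

lemma PiOne_eq_zero_of_ne_zero (lam : ℝ) (m : ℕ) {x : Fin d → ℤ} (hx : x ≠ 0) :
    PiOne d lam m x = 0 := by
  refine sum_eq_zero fun σ _ => ?_
  split_ifs with hend
  · rw [Uind_zero_left_of_ne (hend ▸ hx), zero_mul]
  · rfl

lemma lace_weight_cons_le (h0 : 0 ≤ lam) (h1 : lam ≤ 1) (p : Fin d × Bool)
    (σ : Fin n → Fin d × Bool) :
    let τ : Fin (n + 1) → Fin d × Bool := Fin.cons p σ
    Uind τ 0 (n + 1) *
        ∏ s ∈ range (n + 2), ∏ t ∈ Ioc s (n + 1),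
          (if (s, t) = (0, n + 1) then 1 else 1 - lam * Uind τ s t) ≤
      ∏ s ∈ range (n + 1), ∏ t ∈ Ioc s n, (1 - lam * Uind σ s t) := by
  intro τ
  set f : ℕ → ℕ → ℝ := fun s t => if (s, t) = (0, n + 1) then 1 else 1 - lam * Uind τ s t
  have hf : ∀ s t, 0 ≤ f s t ∧ f s t ≤ 1 := fun s t => by
    simp only [f]
    split
    · exact ⟨zero_le_one, le_rfl⟩
    · exact ⟨one_sub_mul_Uind_nonneg h1 τ s t, one_sub_mul_Uind_le_one h0 τ s t⟩
  have htail : ∀ s t, f (s + 1) (t + 1) = 1 - lam * Uind σ s t := fun s t => by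
    simp only [f, Prod.mk.injEq, Nat.succ_ne_zero, false_and, if_false, τ, Uind_cons]
  have hrow_zero : ∏ t ∈ Ioc 0 (n + 1), f 0 t ≤ 1 :=
    prod_le_one (fun t _ => (hf 0 t).1) fun t _ => (hf 0 t).2
  have htail_nonneg : 0 ≤ ∏ s ∈ range (n + 1), ∏ t ∈ Ioc s n, (1 - lam * Uind σ s t) :=
    prod_nonneg fun s _ => prod_nonneg fun t _ => one_sub_mul_Uind_nonneg h1 σ s t
  calc Uind τ 0 (n + 1) * ∏ s ∈ range (n + 2), ∏ t ∈ Ioc s (n + 1), f s t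
      ≤ ∏ s ∈ range (n + 2), ∏ t ∈ Ioc s (n + 1), f s t :=
        mul_le_of_le_one_left (prod_nonneg fun s _ => prod_nonneg fun t _ => (hf s t).1)
          (Uind_le_one τ 0 (n + 1))
    _ = (∏ s ∈ range (n + 1), ∏ t ∈ Ioc s n, (1 - lam * Uind σ s t)) *
          ∏ t ∈ Ioc 0 (n + 1), f 0 t := by
        simp only [prod_range_prod_Ioc_succ, htail]
    _ ≤ ∏ s ∈ range (n + 1), ∏ t ∈ Ioc s n, (1 - lam * Uind σ s t) :=
        mul_le_of_le_one_right htail_nonneg hrow_zero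

lemma PiOne_zero_le (h0 : 0 ≤ lam) (h1 : lam ≤ 1) (n : ℕ) :
    PiOne d lam (n + 1) 0 ≤ ∑ p : Fin d × Bool, Conn d lam n (-(dirStep d p)) := by
  rw [PiOne, ← (Fin.consEquiv fun _ => Fin d × Bool).sum_comp, Fintype.sum_prod_type]
  refine sum_le_sum fun p _ => sum_le_sum fun σ _ => ?_
  have hend : pathPos (Fin.cons p σ : Fin (n + 1) → Fin d × Bool) (n + 1) = 0 ↔
      pathPos σ n = -dirStep d p := by
    rw [pathPos_cons, eq_neg_iff_add_eq_zero, add_comm]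
  rw [show (Fin.consEquiv fun _ => Fin d × Bool) (p, σ) = Fin.cons p σ from rfl]
  simp only [hend]
  split_ifs
  · exact lace_weight_cons_le h0 h1 p σ
  · exact le_rfl

end Walks

theorem pi_one_bound_general (d : ℕ) (lam : ℝ) (h0 : 0 ≤ lam) (h1 : lam ≤ 1)
    (m : ℕ) (hm : 2 ≤ m) (x : Fin d → ℤ) :
    PiOne d lam m x ≤
      (if x = 0 then 1 else 0) *
        ∑ p : Fin d × Bool, Conn d lam (m - 1) (-(dirStep d p)) := by
  by_cases hx : x = 0
  · obtain ⟨n, rfl⟩ : ∃ n, m = n + 1 := ⟨m - 1, by omega⟩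
    rw [hx, if_pos rfl, one_mul, Nat.add_sub_cancel]
    exact PiOne_zero_le h0 h1 n
  · rw [PiOne_eq_zero_of_ne_zero lam m hx, if_neg hx, zero_mul]

/-- `Π_m^{(1)}(x) ≤ δ_{0,x} · 2d · (D * C_{m-1})(0)`, where
`2d (D*C_{m-1})(0) = ∑_{|y|=1} C_{m-1}(-y)`. -/
theorem pi_one_bound (d : ℕ) (hd : 1 ≤ d) (lam : ℝ) (h0 : 0 ≤ lam) (h1 : lam ≤ 1)
    (m : ℕ) (hm : 2 ≤ m) (x : Fin d → ℤ) :
    PiOne d lam m x ≤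
      (if x = 0 then 1 else 0) *
        ∑ p : Fin d × Bool, Conn d lam (m - 1) (-(dirStep d p)) :=
  pi_one_bound_general d lam h0 h1 m hm x
end
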